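/- arXiv:2602.17286 — 10 statements merged into one kernel-verified Lean document; each statement's English description precedes it below -/
import Mathlib

section
/- Let S = M[G;I,Λ;P] be a Rees matrix semigroup over a DSC group G and let ρ be a diagonal subsemigroup of S. If (i,g,λ) ρ (i,h,λ) then (i,g⁻¹,λ) ρ (i,h⁻¹,λ). -/
/-- A relation `ρ` is a *diagonal subsemigroup* with respect to multiplication `mul`:
it is reflexive and compatible with `mul`. -/
def IsDiagonal {S : Type*} (mul : S → S → S) (ρ : S → S → Prop) : Prop :=
  (∀ s, ρ s s) ∧ ∀ a b c d, ρ a b → ρ c d → ρ (mul a c) (mul b d)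

/-- A relation `ρ` is a *congruence* with respect to `mul`. -/
def IsCongruence {S : Type*} (mul : S → S → S) (ρ : S → S → Prop) : Prop :=
  Equivalence ρ ∧ ∀ a b c d, ρ a b → ρ c d → ρ (mul a c) (mul b d)

/-- A magma is *DSC* if every diagonal subsemigroup is a congruence. -/
def IsDSC {S : Type*} (mul : S → S → S) : Prop :=
  ∀ ρ : S → S → Prop, IsDiagonal mul ρ → IsCongruence mul ρ

/-- Multiplication of the Rees matrix semigroup `M[G;I,Λ;P]` on `I × G × Λ`:
`(i,g,λ)(j,h,μ) = (i, g * p_{λ j} * h, μ)`. -/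
def rmul {G I Λ : Type*} [Group G] (P : Λ → I → G) (x y : I × G × Λ) : I × G × Λ :=
  ⟨x.1, x.2.1 * P x.2.2 y.1 * y.2.1, y.2.2⟩

/-- The extract `q_{λμij} = p_{λ i} p_{μ i}⁻¹ p_{μ j} p_{λ j}⁻¹` of the matrix `P`. -/
def extract {G I Λ : Type*} [Group G] (P : Λ → I → G) (l m : Λ) (i j : I) : G :=
  P l i * (P m i)⁻¹ * P m j * (P l j)⁻¹

/-- A triple `(N, 𝒮, 𝒯)` is *linked* if all the extracts corresponding to pairs in
`𝒮` and in `𝒯` lie in `N`. -/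
def IsLinked {G I Λ : Type*} [Group G] (P : Λ → I → G) (N : Set G)
    (SR : I → I → Prop) (TR : Λ → Λ → Prop) : Prop :=
  (∀ i j, SR i j → ∀ l m, extract P l m i j ∈ N) ∧
  (∀ l m, TR l m → ∀ i j, extract P l m i j ∈ N)

/-- `N_ρ = {g ∈ G : (i,g,λ) ρ (i,1,λ) for all i ∈ I, λ ∈ Λ}`. -/
def kerRel {G I Λ : Type*} [Group G] (ρ : (I × G × Λ) → (I × G × Λ) → Prop) : Set G :=
  {g | ∀ (i : I) (l : Λ), ρ (i, g, l) (i, 1, l)}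

/-- `ρ_I = {(i,j) : (i,p_{λ i}⁻¹,λ) ρ (j,p_{λ j}⁻¹,λ) for all λ ∈ Λ}`. -/
def relI {G I Λ : Type*} [Group G] (P : Λ → I → G)
    (ρ : (I × G × Λ) → (I × G × Λ) → Prop) (i j : I) : Prop :=
  ∀ l : Λ, ρ (i, (P l i)⁻¹, l) (j, (P l j)⁻¹, l)

/-- `ρ_Λ = {(λ,μ) : (i,p_{λ i}⁻¹,λ) ρ (i,p_{μ i}⁻¹,μ) for all i ∈ I}`. -/
def relL {G I Λ : Type*} [Group G] (P : Λ → I → G)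
    (ρ : (I × G × Λ) → (I × G × Λ) → Prop) (l m : Λ) : Prop :=
  ∀ i : I, ρ (i, (P l i)⁻¹, l) (i, (P m i)⁻¹, m)

/-- The relation `ρ_{N,𝒮,𝒯}` associated with a triple `(N,𝒮,𝒯)`:
`(i,g,λ) ρ (j,h,μ)` iff `(i,j) ∈ 𝒮`, `(λ,μ) ∈ 𝒯` and
`p_{ν i} g p_{λ k} p_{μ k}⁻¹ h⁻¹ p_{ν j}⁻¹ ∈ N` for all `k ∈ I`, `ν ∈ Λ`. -/
def relOfTriple {G I Λ : Type*} [Group G] (P : Λ → I → G)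
    (N : Set G) (SR : I → I → Prop) (TR : Λ → Λ → Prop)
    (x y : I × G × Λ) : Prop :=
  SR x.1 y.1 ∧ TR x.2.2 y.2.2 ∧
    ∀ (k : I) (ν : Λ),
      P ν x.1 * x.2.1 * P x.2.2 k * (P y.2.2 k)⁻¹ * y.2.1⁻¹ * (P ν y.1)⁻¹ ∈ N

/-- In a Rees matrix semigroup over a DSC group, a diagonal subsemigroup relating
`(i,g,λ)` and `(i,h,λ)` also relates `(i,g⁻¹,λ)` and `(i,h⁻¹,λ)`. -/
theorem stmt3 {G I Λ : Type*} [Group G] (hG : IsDSC (fun a b : G => a * b))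
    (P : Λ → I → G) (ρ : (I × G × Λ) → (I × G × Λ) → Prop)
    (hρ : IsDiagonal (rmul P) ρ)
    (i : I) (l : Λ) (g h : G) (hgh : ρ (i, g, l) (i, h, l)) :
    ρ (i, g⁻¹, l) (i, h⁻¹, l) := by
  set p := P l i with hp
  set σ : G → G → Prop := fun a b => ρ (i, a * p⁻¹, l) (i, b * p⁻¹, l) with hσ
  have hd : IsDiagonal (fun a b : G => a * b) σ := by
    constructor
    · intro s; exact hρ.1 _
    · intro a b c d hab hcd
      have := hρ.2 _ _ _ _ hab hcd
      simpa [σ, rmul, mul_assoc, ← hp] using this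
  obtain ⟨heq, hcomp⟩ := hG σ hd
  have h1 : σ (g * p) (h * p) := by simpa [σ] using hgh
  have h2 : σ 1 ((g * p)⁻¹ * (h * p)) := by
    simpa [mul_assoc, inv_mul_cancel_left] using hcomp _ _ _ _ (heq.refl (g * p)⁻¹) h1
  have h3 : σ (h * p)⁻¹ (g * p)⁻¹ := by
    simpa [mul_assoc, mul_inv_cancel_left] using hcomp _ _ _ _ h2 (heq.refl (h * p)⁻¹)
  have h4 : σ (g * p)⁻¹ (h * p)⁻¹ := heq.symm h3
  have h5 : σ (p * (g * p)⁻¹ * p) (p * (h * p)⁻¹ * p) :=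
    hcomp _ _ _ _ (hcomp _ _ _ _ (heq.refl p) h4) (heq.refl p)
  have e : ∀ x : G, p * (x * p)⁻¹ * p = x⁻¹ * p := by intro x; group
  rw [e, e] at h5
  simpa [σ, mul_assoc] using h5
end

section
/- Let S = M[G;I,Λ;P] be a Rees matrix semigroup over a DSC group G. If ρ is a diagonal subsemigroup of S, then (N_ρ, ρ_I, ρ_Λ) is a linked reflexive triple; in particular N_ρ is a normal subgroup of G, the relations ρ_I and ρ_Λ are reflexive, and all the corresponding extracts lie in N_ρ. -/
/-- If `ρ` is a diagonal subsemigroup of a Rees matrix semigroup over a DSC group `G`,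
then `(N_ρ, ρ_I, ρ_Λ)` is a linked reflexive triple: `N_ρ` is a normal subgroup of `G`,
`ρ_I` and `ρ_Λ` are reflexive, and all the corresponding extracts lie in `N_ρ`. -/
theorem stmt4 {G I Λ : Type*} [Group G] (hG : IsDSC (fun a b : G => a * b))
    (P : Λ → I → G) (ρ : (I × G × Λ) → (I × G × Λ) → Prop)
    (hρ : IsDiagonal (rmul P) ρ) :
    (∃ N : Subgroup G, N.Normal ∧ (N : Set G) = kerRel ρ) ∧
    (∀ i : I, relI P ρ i i) ∧ (∀ l : Λ, relL P ρ l l) ∧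
    IsLinked P (kerRel ρ) (relI P ρ) (relL P ρ) := by

  obtain ⟨hrefl, hmul⟩ := hρ
  set σ : G → G → Prop :=
    fun g h => ∀ (i : I) (l : Λ), ρ (i, g * (P l i)⁻¹, l) (i, h * (P l i)⁻¹, l) with hσdef
  have hσdiag : IsDiagonal (fun a b : G => a * b) σ := by
    refine ⟨fun g i l => hrefl _, fun a b c d hab hcd i l => ?_⟩
    have := hmul (i, a * (P l i)⁻¹, l) (i, b * (P l i)⁻¹, l)
      (i, c * (P l i)⁻¹, l) (i, d * (P l i)⁻¹, l) (hab i l) (hcd i l)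
    simpa [rmul, mul_assoc] using this
  obtain ⟨hσequiv, hσcomp⟩ := hG σ hσdiag
  have hker : ∀ g, g ∈ kerRel ρ ↔ σ g 1 := by
    intro g
    constructor
    · intro hg i l
      have := hmul (i, g, l) (i, (1:G), l) (i, (P l i)⁻¹ * (P l i)⁻¹, l)
        (i, (P l i)⁻¹ * (P l i)⁻¹, l) (hg i l) (hrefl _)
      simpa [rmul, mul_assoc] using this
    · intro hg i l
      have := hmul (i, g * (P l i)⁻¹, l) (i, (1:G) * (P l i)⁻¹, l)
        (i, (1:G), l) (i, (1:G), l) (hg i l) (hrefl _)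
      simpa [rmul, mul_assoc] using this
  refine ⟨⟨{ carrier := kerRel ρ,
             mul_mem' := ?_, one_mem' := ?_, inv_mem' := ?_ }, ⟨?_⟩, rfl⟩, ?_, ?_, ?_, ?_⟩
  · intro a b ha hb
    refine (hker _).mpr ?_
    have := hσcomp a 1 b 1 ((hker a).mp ha) ((hker b).mp hb)
    simpa using this
  · exact (hker 1).mpr (hσequiv.refl 1)
  · intro a ha
    refine (hker _).mpr ?_
    have := hσcomp a⁻¹ a⁻¹ a 1 (hσequiv.refl _) ((hker a).mp ha)
    exact hσequiv.symm (by simpa using this)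
  · intro n hn g
    refine (hker _).mpr ?_
    have h1 := hσcomp g g n 1 (hσequiv.refl _) ((hker n).mp hn)
    have h2 := hσcomp (g * n) (g * 1) g⁻¹ g⁻¹ h1 (hσequiv.refl _)
    simpa using h2
  · intro i l
    exact hrefl _
  · intro l i
    exact hrefl _
  · intro i j h l m k ν
    have h1 := hmul (k, (1:G), l) (k, (1:G), l) (i, (P m i)⁻¹, m) (j, (P m j)⁻¹, m)
      (hrefl _) (h m)
    have h2 := hmul _ _ (j, (P l j)⁻¹, ν) (j, (P l j)⁻¹, ν) h1 (hrefl _)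
    simpa [rmul, extract, mul_assoc] using h2
  · intro l m h i j k ν
    have h1 := hmul (k, (1:G), l) (k, (1:G), l) (j, (P l j)⁻¹, l) (j, (P m j)⁻¹, m)
      (hrefl _) (h j)
    have h2 := hmul _ _ (i, (P m i)⁻¹ * (P m j * (P l j)⁻¹), ν)
      (i, (P m i)⁻¹ * (P m j * (P l j)⁻¹), ν) h1 (hrefl _)
    simpa [rmul, extract, mul_assoc] using h2
end

section
/- Let M[G;I,Λ;P] be a Rees matrix semigroup and let (N,𝒮,𝒯) be a linked reflexive triple. Then the relation ρ_{N,𝒮,𝒯} is a diagonal subsemigroup of M[G;I,Λ;P]. -/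
/-- If `(N,𝒮,𝒯)` is a linked reflexive triple, then `ρ_{N,𝒮,𝒯}` is a diagonal
subsemigroup of the Rees matrix semigroup `M[G;I,Λ;P]`. -/
theorem stmt5 {G I Λ : Type*} [Group G] (P : Λ → I → G)
    (N : Subgroup G) (hN : N.Normal)
    (SR : I → I → Prop) (TR : Λ → Λ → Prop)
    (hS : ∀ i, SR i i) (hT : ∀ l, TR l l)
    (hlink : IsLinked P (N : Set G) SR TR) :
    IsDiagonal (rmul P) (relOfTriple P (N : Set G) SR TR) := by
  constructor
  · rintro ⟨i, g, l⟩
    refine ⟨hS i, hT l, fun k ν => ?_⟩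
    have h1 : P ν i * g * P l k * (P l k)⁻¹ * g⁻¹ * (P ν i)⁻¹ = 1 := by group
    simpa [relOfTriple, h1] using N.one_mem
  · rintro ⟨i, g, l⟩ ⟨j, h, m⟩ ⟨k, g', κ⟩ ⟨k', h', κ'⟩ ⟨hS1, hT1, hA⟩ ⟨hS2, hT2, hB⟩
    refine ⟨hS1, hT2, fun mm ν => ?_⟩
    simp only [rmul]
    have hAk := hA k' ν
    have hBk := hB mm l
    have hC := hN.conj_mem _ hBk (P ν i * g)
    have key : P ν i * (g * P l k * g') * P κ mm * (P κ' mm)⁻¹ *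
        (h * P m k' * h')⁻¹ * (P ν j)⁻¹ =
        ((P ν i * g) * (P l k * g' * P κ mm * (P κ' mm)⁻¹ * h'⁻¹ * (P l k')⁻¹) * (P ν i * g)⁻¹) *
        (P ν i * g * P l k' * (P m k')⁻¹ * h⁻¹ * (P ν j)⁻¹) := by
      group
    rw [key]
    exact N.mul_mem hC hAk
end

section
/- Let S = M[G;I,Λ;P] be a Rees matrix semigroup over a DSC group G, and let ρ be a diagonal subsemigroup of S. Setting N = N_ρ, 𝒮 = ρ_I and 𝒯 = ρ_Λ, one has ρ = ρ_{N,𝒮,𝒯}. -/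

private lemma mkEq {G I Λ : Type*} (i : I) (ν : Λ) {A B : G} (h : A = B) :
    ((i, A, ν) : I × G × Λ) = (i, B, ν) := by rw [h]

private lemma rcast {S : Type*} {ρ : S → S → Prop} {a b a' b' : S}
    (h : ρ a b) (ha : a = a') (hb : b = b') : ρ a' b' := ha ▸ hb ▸ h

private lemma symmLocal {G I Λ : Type*} [Group G] (hG : IsDSC (fun a b : G => a * b))
    {P : Λ → I → G} {ρ : (I × G × Λ) → (I × G × Λ) → Prop}
    (hρ : IsDiagonal (rmul P) ρ) (k : I) (ν : Λ) {u v : G}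
    (h : ρ (k, u, ν) (k, v, ν)) : ρ (k, v, ν) (k, u, ν) := by
  have hdiag : IsDiagonal (fun a b : G => a * b)
      (fun a b => ρ (k, (P ν k)⁻¹ * a, ν) (k, (P ν k)⁻¹ * b, ν)) := by
    refine ⟨fun s => hρ.1 _, fun a b c d hab hcd => ?_⟩
    exact rcast (hρ.2 _ _ _ _ hab hcd) (mkEq k ν (by first | (simp only [rmul]; group) | group)) (mkEq k ν (by first | (simp only [rmul]; group) | group))
  have hs : ρ (k, (P ν k)⁻¹ * (P ν k * u), ν) (k, (P ν k)⁻¹ * (P ν k * v), ν) :=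
    rcast h (mkEq k ν (by first | (simp only [rmul]; group) | group)) (mkEq k ν (by first | (simp only [rmul]; group) | group))
  have := (hG _ hdiag).1.symm hs
  exact rcast this (mkEq k ν (by first | (simp only [rmul]; group) | group)) (mkEq k ν (by first | (simp only [rmul]; group) | group))

/-- If `ρ` is a diagonal subsemigroup of a Rees matrix semigroup over a DSC group `G`,
then `ρ = ρ_{N,𝒮,𝒯}` where `N = N_ρ`, `𝒮 = ρ_I` and `𝒯 = ρ_Λ`. -/
theorem stmt7 {G I Λ : Type*} [Group G] (hG : IsDSC (fun a b : G => a * b))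
    (P : Λ → I → G) (ρ : (I × G × Λ) → (I × G × Λ) → Prop)
    (hρ : IsDiagonal (rmul P) ρ) :
    ρ = relOfTriple P (kerRel ρ) (relI P ρ) (relL P ρ) := by
  obtain ⟨hrefl, hmul⟩ := hρ
  funext x y
  obtain ⟨i, g, l⟩ := x
  obtain ⟨j, h, m⟩ := y
  apply propext
  constructor
  · intro hxy
    -- the key "star" family
    have star : ∀ (k : I) (ν : Λ) (a d : G) (k₀ : I) (ν₀ : Λ),
        ρ (k, a * (P ν₀ i * g * P l k₀ * (P m k₀)⁻¹ * h⁻¹ * (P ν₀ j)⁻¹) * d, ν)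
          (k, a * d, ν) := by
      intro k ν a d k₀ ν₀
      have h1 := hmul (k, a, ν₀) (k, a, ν₀) (i, g, l) (j, h, m) (hrefl _) hxy
      have h2 := hmul _ _ _ _ h1 (hrefl (k₀, (P m k₀)⁻¹ * h⁻¹ * (P ν₀ j)⁻¹ * d, ν))
      exact rcast h2 (mkEq k ν (by first | (simp only [rmul]; group) | group)) (mkEq k ν (by first | (simp only [rmul]; group) | group))
    refine ⟨?_, ?_, ?_⟩
    · -- relI
      intro ν
      have X : ρ (i, (P ν i)⁻¹, ν)
          (j, (P ν j)⁻¹ * (P ν i * g * P l i * (P m i)⁻¹ * h⁻¹ * (P ν j)⁻¹)⁻¹, ν) := by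
        have := hmul (i, g, l) (j, h, m) (i, (P l i)⁻¹ * g⁻¹ * (P ν i)⁻¹, ν)
          (i, (P l i)⁻¹ * g⁻¹ * (P ν i)⁻¹, ν) hxy (hrefl _)
        exact rcast this (mkEq i ν (by first | (simp only [rmul]; group) | group)) (mkEq j ν (by first | (simp only [rmul]; group) | group))
      have Y : ρ (i, (P ν i)⁻¹, ν)
          (i, (P ν i)⁻¹ * (P ν i * g * P l i * (P m i)⁻¹ * h⁻¹ * (P ν j)⁻¹), ν) := by
        refine symmLocal hG ⟨hrefl, hmul⟩ i ν ?_
        exact rcast (star i ν (P ν i)⁻¹ 1 i ν) (mkEq i ν (by first | (simp only [rmul]; group) | group)) (mkEq i ν (by first | (simp only [rmul]; group) | group))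
      exact rcast (hmul _ _ _ _ X Y) (mkEq i ν (by first | (simp only [rmul]; group) | group)) (mkEq j ν (by first | (simp only [rmul]; group) | group))
    · -- relL
      intro k
      have X' : ρ (k, (P l k)⁻¹, l)
          (k, (P l k)⁻¹ * g⁻¹ * (P l i)⁻¹ * P l j * h, m) := by
        have := hmul (k, (P l k)⁻¹ * g⁻¹ * (P l i)⁻¹, l)
          (k, (P l k)⁻¹ * g⁻¹ * (P l i)⁻¹, l) (i, g, l) (j, h, m) (hrefl _) hxy
        exact rcast this (mkEq k l (by first | (simp only [rmul]; group) | group)) (mkEq k m (by first | (simp only [rmul]; group) | group))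
      have Y : ρ (k, (P l k)⁻¹, l)
          (k, (P l k)⁻¹ * ((P l i * g)⁻¹ *
            (P l i * g * P l k * (P m k)⁻¹ * h⁻¹ * (P l j)⁻¹) * (P l i * g)), l) := by
        refine symmLocal hG ⟨hrefl, hmul⟩ k l ?_
        exact rcast (star k l ((P l k)⁻¹ * (P l i * g)⁻¹) (P l i * g) k l)
          (mkEq k l (by first | (simp only [rmul]; group) | group)) (mkEq k l (by first | (simp only [rmul]; group) | group))
      exact rcast (hmul _ _ _ _ Y X') (mkEq k l (by first | (simp only [rmul]; group) | group)) (mkEq k m (by first | (simp only [rmul]; group) | group))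
    · -- the N condition
      intro k ν k' ν'
      exact rcast (star k' ν' 1 1 k ν) (mkEq k' ν' (by first | (simp only [rmul]; group) | group)) (mkEq k' ν' (by first | (simp only [rmul]; group) | group))
  · rintro ⟨hS, hT, hN⟩
    have C0 : ρ (i, P l i * g * P l i * (P m i)⁻¹ * h⁻¹ * (P l j)⁻¹, l) (i, 1, l) :=
      hN i l i l
    -- translate C0 :  ρ (i, a*Q*d, l) (i, a*d, l)  with a = (P l i)⁻¹, d = Q⁻¹ * P l i * g
    have C1 := hmul (i, (P l i)⁻¹ * (P l i)⁻¹, l) (i, (P l i)⁻¹ * (P l i)⁻¹, l) _ _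
      (hrefl _) C0
    have C2 := hmul _ _ _ _ C1
      (hrefl (i, (P l i)⁻¹ *
        ((P l i * g * P l i * (P m i)⁻¹ * h⁻¹ * (P l j)⁻¹)⁻¹ * (P l i * g)), l))
    have C' : ρ (i, g, l)
        (i, (P l i)⁻¹ * (P l i * g * P l i * (P m i)⁻¹ * h⁻¹ * (P l j)⁻¹)⁻¹ * (P l i * g), l) :=
      rcast C2 (mkEq i l (by first | (simp only [rmul]; group) | group)) (mkEq i l (by first | (simp only [rmul]; group) | group))
    have A' : ρ (i, (P l i)⁻¹, l) (j, (P l j)⁻¹, l) := hS l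
    have B' : ρ (i, (P l i)⁻¹, l) (i, (P m i)⁻¹, m) := hT i
    have step1 := hmul _ _ _ _ A' C'
    have step2 := hmul _ _ _ _ step1 B'
    exact rcast step2 (mkEq i l (by first | (simp only [rmul]; group) | group)) (mkEq j m (by first | (simp only [rmul]; group) | group))
end

section
/- Let G be a group, P a Λ×I matrix with entries in G, and N a normal subgroup of G. If ℛ_I is a set of relations on I such that the triple (N,𝒮,Δ_Λ) is linked for each 𝒮 ∈ ℛ_I, then (N,⟨ℛ_I⟩,Δ_Λ) is a linked triple. Dually, if ℛ_Λ is a set of relations on Λ such that (N,Δ_I,𝒯) is linked for each 𝒯 ∈ ℛ_Λ, then (N,Δ_I,⟨ℛ_Λ⟩) is linked. -/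

private lemma e_refl {G I Λ : Type*} [Group G] (P : Λ → I → G) (l m : Λ) (i : I) :
    extract P l m i i = 1 := by simp [extract]

private lemma e_symm {G I Λ : Type*} [Group G] (P : Λ → I → G) (l m : Λ) (i j : I) :
    extract P l m j i = (extract P l m i j)⁻¹ := by simp [extract]; group

private lemma e_trans {G I Λ : Type*} [Group G] (P : Λ → I → G) (l m : Λ) (i j k : I) :
    extract P l m i k = extract P l m i j * extract P l m j k := by simp [extract]; group

private lemma f_refl {G I Λ : Type*} [Group G] (P : Λ → I → G) (l : Λ) (i j : I) :
    extract P l l i j = 1 := by simp [extract]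

private lemma f_symm {G I Λ : Type*} [Group G] (P : Λ → I → G) (l m : Λ) (i j : I) :
    extract P m l i j
      = (P m i * (P l i)⁻¹) * (extract P l m i j)⁻¹ * (P m i * (P l i)⁻¹)⁻¹ := by
  simp [extract]; group

private lemma f_trans {G I Λ : Type*} [Group G] (P : Λ → I → G) (l m n : Λ) (i j : I) :
    extract P l n i j
      = ((P l i * (P m i)⁻¹) * extract P m n i j * (P l i * (P m i)⁻¹)⁻¹)
        * extract P l m i j := by
  simp [extract]; group

/-- Generating an equivalence relation respects the notion of being linked:
if `(N,𝒮,Δ_Λ)` is linked for every `𝒮` in a set `ℛ_I` of relations on `I`,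
then `(N,⟨ℛ_I⟩,Δ_Λ)` is linked, where `⟨ℛ_I⟩` is the smallest equivalence relation
containing the union of `ℛ_I`; and dually. -/
theorem stmt11 {G I Λ : Type*} [Group G] (P : Λ → I → G)
    (N : Subgroup G) (hN : N.Normal) :
    (∀ RI : Set (I → I → Prop),
      (∀ SR ∈ RI, IsLinked P (N : Set G) SR (fun l m : Λ => l = m)) →
      IsLinked P (N : Set G)
        (Relation.EqvGen (fun i j : I => ∃ SR ∈ RI, SR i j))
        (fun l m : Λ => l = m)) ∧
    (∀ RL : Set (Λ → Λ → Prop),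
      (∀ TR ∈ RL, IsLinked P (N : Set G) (fun i j : I => i = j) TR) →
      IsLinked P (N : Set G) (fun i j : I => i = j)
        (Relation.EqvGen (fun l m : Λ => ∃ TR ∈ RL, TR l m))) := by
  constructor
  · intro RI h
    refine ⟨?_, ?_⟩
    · intro i j hij l m
      induction hij with
      | rel i j hr =>
        obtain ⟨SR, hSR, hs⟩ := hr
        exact (h SR hSR).1 i j hs l m
      | refl i => rw [e_refl]; exact N.one_mem
      | symm i j _ ih => rw [e_symm]; exact N.inv_mem ih
      | trans i j k _ _ ih1 ih2 => rw [e_trans P l m i j k]; exact N.mul_mem ih1 ih2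
    · rintro l m rfl i j
      rw [f_refl]; exact N.one_mem
  · intro RL h
    refine ⟨?_, ?_⟩
    · rintro i j rfl l m
      rw [e_refl]; exact N.one_mem
    · intro l m hlm i j
      induction hlm with
      | rel l m hr =>
        obtain ⟨TR, hTR, ht⟩ := hr
        exact (h TR hTR).2 l m ht i j
      | refl l => rw [f_refl]; exact N.one_mem
      | symm l m _ ih =>
        rw [f_symm]; exact hN.conj_mem _ (N.inv_mem ih) _
      | trans l m n _ _ ih1 ih2 =>
        rw [f_trans P l m n i j]
        exact N.mul_mem (hN.conj_mem _ ih2 _) ih1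
end

section
/- Let n, r, k₁, …, k_r be positive natural numbers with n = k₁ + ⋯ + k_r. Then B(n)/2^(n²−n) ≤ (B(k₁)/2^(k₁²−k₁)) · (B(k₂)/2^(k₂²−k₂)) ⋯ (B(k_r)/2^(k_r²−k_r)). -/
/-- The `m`-th Bell number: the number of equivalence relations on a set of size `m`. -/
noncomputable def bell (m : ℕ) : ℕ := Nat.card (Setoid (Fin m))

instance finiteSetoidFin (a : ℕ) : Finite (Setoid (Fin a)) :=
  Finite.of_injective (fun s => s.r) fun _ _ h =>
    Setoid.ext fun x y => iff_of_eq (congrFun (congrFun h x) y)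

lemma bell_add_le (a b : ℕ) : bell (a + b) ≤ bell a * bell b * 2 ^ (a * b) := by
  have hinj : Function.Injective (fun s : Setoid (Fin (a + b)) =>
      (s.comap (Fin.castAdd b), s.comap (Fin.natAdd a),
        fun (x : Fin a) (y : Fin b) => s.r (Fin.castAdd b x) (Fin.natAdd a y))) := by
    intro s t h
    simp only [Prod.mk.injEq] at h
    obtain ⟨h1, h2, h3⟩ := h
    have e1 : ∀ x y : Fin a, s.r (Fin.castAdd b x) (Fin.castAdd b y) ↔
        t.r (Fin.castAdd b x) (Fin.castAdd b y) := fun x y =>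
      iff_of_eq (congrFun (congrFun (congrArg (fun q : Setoid (Fin a) => q.r) h1) x) y)
    have e2 : ∀ x y : Fin b, s.r (Fin.natAdd a x) (Fin.natAdd a y) ↔
        t.r (Fin.natAdd a x) (Fin.natAdd a y) := fun x y =>
      iff_of_eq (congrFun (congrFun (congrArg (fun q : Setoid (Fin b) => q.r) h2) x) y)
    have e3 : ∀ (x : Fin a) (y : Fin b), s.r (Fin.castAdd b x) (Fin.natAdd a y) ↔
        t.r (Fin.castAdd b x) (Fin.natAdd a y) := fun x y =>
      iff_of_eq (congrFun (congrFun h3 x) y)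
    apply Setoid.ext
    intro u v
    induction u using Fin.addCases with
    | left x =>
      induction v using Fin.addCases with
      | left y => exact e1 x y
      | right y => exact e3 x y
    | right x =>
      induction v using Fin.addCases with
      | left y =>
        constructor
        · intro h'; exact t.symm' ((e3 y x).mp (s.symm' h'))
        · intro h'; exact s.symm' ((e3 y x).mpr (t.symm' h'))
      | right y => exact e2 x y
  have hf : Nat.card (Fin a → Fin b → Prop) = 2 ^ (a * b) := by
    simp [Nat.card_fun, Nat.card_eq_fintype_card, ← pow_mul, mul_comm]
  calc bell (a + b) ≤ Nat.card (Setoid (Fin a) × Setoid (Fin b) × (Fin a → Fin b → Prop)) :=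
        Nat.card_le_card_of_injective _ hinj
    _ = bell a * bell b * 2 ^ (a * b) := by
        rw [Nat.card_prod, Nat.card_prod, hf, mul_assoc]; rfl

lemma exp_ineq' (S T a : ℕ) (h : T ≤ S ^ 2) :
    S ^ 2 - T + S * a ≤ (S + a) ^ 2 - (T + a ^ 2) := by
  have e1 : (S + a) ^ 2 = S ^ 2 + 2 * (S * a) + a ^ 2 := by ring
  omega

lemma bell_sum_le : ∀ (r : ℕ) (k : Fin r → ℕ),
    bell (∑ i, k i) ≤ (∏ i, bell (k i)) * 2 ^ ((∑ i, k i) ^ 2 - ∑ i, (k i) ^ 2) := by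
  intro r
  induction r with
  | zero =>
    intro k
    simp only [Finset.univ_eq_empty, Finset.sum_empty, Finset.prod_empty]
    have : Subsingleton (Setoid (Fin 0)) :=
      ⟨fun s t => Setoid.ext fun x => x.elim0⟩
    simpa [bell] using Nat.card_le_one_iff_subsingleton.mpr this
  | succ r ih =>
    intro k
    rw [Fin.sum_univ_castSucc, Fin.prod_univ_castSucc,
      Fin.sum_univ_castSucc (f := fun i => k i ^ 2)]
    refine le_trans (bell_add_le _ _) ?_
    calc bell (∑ i : Fin r, k i.castSucc) * bell (k (Fin.last r))
          * 2 ^ ((∑ i : Fin r, k i.castSucc) * k (Fin.last r))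
        ≤ ((∏ i : Fin r, bell (k i.castSucc))
            * 2 ^ ((∑ i : Fin r, k i.castSucc) ^ 2 - ∑ i : Fin r, (k i.castSucc) ^ 2))
            * bell (k (Fin.last r))
            * 2 ^ ((∑ i : Fin r, k i.castSucc) * k (Fin.last r)) := by
          gcongr
          exact ih _
      _ = ((∏ i : Fin r, bell (k i.castSucc)) * bell (k (Fin.last r)))
            * 2 ^ (((∑ i : Fin r, k i.castSucc) ^ 2 - ∑ i : Fin r, (k i.castSucc) ^ 2)
              + (∑ i : Fin r, k i.castSucc) * k (Fin.last r)) := by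
          rw [pow_add]; ring
      _ ≤ ((∏ i : Fin r, bell (k i.castSucc)) * bell (k (Fin.last r)))
            * 2 ^ ((∑ i : Fin r, k i.castSucc + k (Fin.last r)) ^ 2
              - (∑ i : Fin r, (k i.castSucc) ^ 2 + (k (Fin.last r)) ^ 2)) := by
          gcongr
          · exact one_le_two
          · exact exp_ineq' _ _ _
              (Finset.sum_sq_le_sq_sum_of_nonneg fun _ _ => Nat.zero_le _)

/-- If `n = k₁ + ⋯ + k_r` with all `kᵢ` positive, then
`B(n)/2^(n²−n) ≤ ∏ᵢ B(kᵢ)/2^(kᵢ²−kᵢ)`. -/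
theorem stmt13 (n r : ℕ) (hn : 0 < n) (hr : 0 < r) (k : Fin r → ℕ)
    (hk : ∀ i, 0 < k i) (hsum : n = ∑ i, k i) :
    (bell n : ℚ) / 2 ^ (n ^ 2 - n) ≤ ∏ i, (bell (k i) : ℚ) / 2 ^ ((k i) ^ 2 - k i) := by
  subst hsum
  have hle : ∀ i : Fin r, k i ≤ (k i) ^ 2 := fun i =>
    Nat.le_self_pow two_ne_zero _
  have hE : ∑ i, ((k i) ^ 2 - k i) = (∑ i, (k i) ^ 2) - ∑ i, k i :=
    Finset.sum_tsub_distrib _ fun i _ => hle i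
  have hTn : ∑ i, k i ≤ ∑ i, (k i) ^ 2 := Finset.sum_le_sum fun i _ => hle i
  have hTN : ∑ i, (k i) ^ 2 ≤ (∑ i, k i) ^ 2 :=
    Finset.sum_sq_le_sq_sum_of_nonneg fun _ _ => Nat.zero_le _
  have natkey : bell (∑ i, k i) * 2 ^ (∑ i, ((k i) ^ 2 - k i))
      ≤ (∏ i, bell (k i)) * 2 ^ ((∑ i, k i) ^ 2 - ∑ i, k i) := by
    rw [hE]
    calc bell (∑ i, k i) * 2 ^ ((∑ i, (k i) ^ 2) - ∑ i, k i)
        ≤ ((∏ i, bell (k i)) * 2 ^ ((∑ i, k i) ^ 2 - ∑ i, (k i) ^ 2))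
          * 2 ^ ((∑ i, (k i) ^ 2) - ∑ i, k i) := by
          gcongr
          exact bell_sum_le r k
      _ = (∏ i, bell (k i)) * 2 ^ ((∑ i, k i) ^ 2 - ∑ i, k i) := by
          rw [mul_assoc, ← pow_add]
          congr 2
          omega
  rw [Finset.prod_div_distrib, Finset.prod_pow_eq_pow_sum,
    div_le_div_iff₀ (by positivity) (by positivity)]
  exact_mod_cast natkey
end

section
/- For all natural numbers s and t, B(s+t) ≤ B(s) · B(t) · 2^(st). -/
instance setoidFinite (α : Type*) [Finite α] : Finite (Setoid α) :=
  Finite.of_injective (fun S => S.r) (by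
    intro a b h
    cases a; cases b; congr)

lemma setoid_r_iff {α : Type*} {S T : Setoid α} (h : S = T) (a b : α) :
    S.r a b ↔ T.r a b := by rw [h]

/-- `B(s+t) ≤ B(s) · B(t) · 2^(st)`. -/
theorem stmt14 (s t : ℕ) : bell (s + t) ≤ bell s * bell t * 2 ^ (s * t) := by
  have key : bell (s + t) ≤
      Nat.card (Setoid (Fin s) × Setoid (Fin t) × (Fin s → Fin t → Prop)) := by
    apply Nat.card_le_card_of_injective
      (fun S => (Setoid.comap (Fin.castAdd t) S, Setoid.comap (Fin.natAdd s) S,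
        fun i j => S.r (Fin.castAdd t i) (Fin.natAdd s j)))
    intro S1 S2 h
    obtain ⟨h1, h2, h3⟩ : _ ∧ _ ∧ _ := by
      refine ⟨congrArg Prod.fst h, congrArg (Prod.fst ∘ Prod.snd) h,
        congrArg (Prod.snd ∘ Prod.snd) h⟩
    ext x y
    refine Fin.addCases (fun i => ?_) (fun i => ?_) x <;> clear x
    · refine Fin.addCases (fun j => ?_) (fun j => ?_) y <;> clear y
      · exact setoid_r_iff h1 i j
      · exact iff_of_eq (congrFun (congrFun h3 i) j)
    · refine Fin.addCases (fun j => ?_) (fun j => ?_) y <;> clear y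
      · constructor
        · intro hr
          exact S2.symm ((iff_of_eq (congrFun (congrFun h3 j) i)).mp (S1.symm hr))
        · intro hr
          exact S1.symm ((iff_of_eq (congrFun (congrFun h3 j) i)).mpr (S2.symm hr))
      · exact setoid_r_iff h2 i j
  calc bell (s + t) ≤ _ := key
    _ = bell s * bell t * 2 ^ (s * t) := by
        have : Nat.card (Fin s → Fin t → Prop) = (2 ^ t) ^ s := by
          simp [Nat.card_fun, Nat.card_eq_fintype_card]
        rw [Nat.card_prod, Nat.card_prod, this, ← pow_mul, mul_comm t s, ← mul_assoc]
        rfl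
end

section
/- Let I and Λ be finite sets of sizes a > 1 and b > 1 respectively. Then for any finite group G and any Λ×I matrix P with entries in G, B(a)B(b)/(2^(a²−a) · 2^(b²−b)) ≤ χ(M[G;I,Λ;P]) < 1. -/
/-- The DSC coefficient: the number of congruences divided by the number of
diagonal subsemigroups. -/
noncomputable def chi {S : Type*} (mul : S → S → S) : ℚ :=
  (Nat.card {ρ : S → S → Prop // IsCongruence mul ρ} : ℚ) /
  (Nat.card {ρ : S → S → Prop // IsDiagonal mul ρ} : ℚ)

/-!
A diagonal subsemigroup `ρ` of `S = M[G;I,Λ;P]` is determined by a triple `(N, R_I, R_Λ)`: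
`N` is the normal subgroup of those `n` with `(k,w,ν) ρ (k,nw,ν)` for all `k, w, ν`, and
`R_I`, `R_Λ` record which rows and which columns `ρ` relates. Both `R_I` and `R_Λ` are
reflexive and lie inside the largest equivalences `Θ_I(N)`, `Θ_Λ(N)` compatible with `N`,
while the congruences are exactly the triples `(N, ε, δ)` with equivalences `ε ≤ Θ_I(N)` and
`δ ≤ Θ_Λ(N)`. Splitting an arbitrary pair of equivalences `ε, δ` along `Θ_I(N)`, `Θ_Λ(N)` gives
the injection
`(ρ, ε, δ) ↦ ((N, ε ⊓ Θ_I, δ ⊓ Θ_Λ), R_I ⊔ ε \ Θ_I, R_Λ ⊔ δ \ Θ_Λ)`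
of `Diag(S) × Eq(I) × Eq(Λ)` into `Cong(S) × Refl(I) × Refl(Λ)`, which is the lower bound.
The upper bound is strict because "`s` and `t` lie in the same row, or `s` lies in a fixed row"
is a diagonal subsemigroup that is not symmetric.
-/

theorem eq_and_eq_of_inf_eq_of_sup_sdiff_eq {α : Type*} [BooleanAlgebra α] {t r r' e e' : α}
    (hr : r ≤ t) (hr' : r' ≤ t) (hinf : e ⊓ t = e' ⊓ t) (hsup : r ⊔ e \ t = r' ⊔ e' \ t) :
    r = r' ∧ e = e' := by
  have inf_right : ∀ {r e : α}, r ≤ t → (r ⊔ e \ t) ⊓ t = r := fun h => by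
    simp [inf_sup_right, inf_eq_left.mpr h]
  have sdiff_right : ∀ {r e : α}, r ≤ t → (r ⊔ e \ t) \ t = e \ t := fun h => by
    simp [sup_sdiff, sdiff_eq_bot_iff.mpr h]
  refine ⟨by rw [← inf_right hr, hsup, inf_right hr'], ?_⟩
  rw [← sup_inf_sdiff e t, ← sup_inf_sdiff e' t, hinf, ← sdiff_right hr, hsup, sdiff_right hr']

def Equiv.setoidCongr {α β : Type*} (e : α ≃ β) : Setoid α ≃ Setoid β where
  toFun s := s.comap e.symm
  invFun s := s.comap e
  left_inv s := by ext; simp [Setoid.comap_rel]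
  right_inv s := by ext; simp [Setoid.comap_rel]

theorem card_equivalence_eq_bell (α : Type*) [Fintype α] :
    Nat.card {r : α → α → Prop // Equivalence r} = bell (Fintype.card α) :=
  Nat.card_congr <| (⟨fun r => ⟨r.1, r.2⟩, fun s => ⟨s.r, s.iseqv⟩, fun _ => rfl, fun _ => rfl⟩ :
    {r : α → α → Prop // Equivalence r} ≃ Setoid α).trans (Equiv.setoidCongr (Fintype.equivFin α))

theorem card_refl_eq_two_pow (α : Type*) [Fintype α] :
    Nat.card {r : α → α → Prop // Std.Refl r} = 2 ^ (Fintype.card α ^ 2 - Fintype.card α) := by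
  classical
  let e : {r : α → α → Prop // Std.Refl r} ≃ ({p : α × α // p.1 ≠ p.2} → Prop) :=
    { toFun := fun r p => r.1 p.1.1 p.1.2
      invFun := fun f => ⟨fun i j => if h : i = j then True else f ⟨(i, j), h⟩, ⟨fun i => by simp⟩⟩
      left_inv := fun r => by
        ext i j
        by_cases h : i = j
        · subst h; simpa using r.2.refl i
        · simp [h]
      right_inv := fun f => funext fun p => by simp [p.2] }
  have hoff : Nat.card {p : α × α // p.1 ≠ p.2} = Fintype.card α ^ 2 - Fintype.card α := by
    rw [Nat.card_eq_fintype_card, Fintype.card_subtype, sq, ← Finset.card_univ,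
      ← Finset.offDiag_card]
    congr 1
    ext p
    simp [Finset.mem_offDiag]
  rw [Nat.card_congr (e.trans (Equiv.arrowCongr (.refl _) Equiv.propEquivBool)), Nat.card_fun,
    hoff, Nat.card_eq_fintype_card, Fintype.card_bool]

theorem Equivalence.inf {α : Type*} {r s : α → α → Prop} (hr : Equivalence r)
    (hs : Equivalence s) : Equivalence (r ⊓ s) :=
  ⟨fun a => ⟨hr.refl a, hs.refl a⟩, fun h => ⟨hr.symm h.1, hs.symm h.2⟩,
    fun h h' => ⟨hr.trans h.1 h'.1, hs.trans h.2 h'.2⟩⟩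

theorem IsDiagonal.mul_left {S : Type*} {mul : S → S → S} {ρ : S → S → Prop}
    (hρ : IsDiagonal mul ρ) (u : S) {s t : S} (h : ρ s t) : ρ (mul u s) (mul u t) :=
  hρ.2 _ _ _ _ (hρ.1 u) h

theorem IsDiagonal.mul_right {S : Type*} {mul : S → S → S} {ρ : S → S → Prop}
    (hρ : IsDiagonal mul ρ) (u : S) {s t : S} (h : ρ s t) : ρ (mul s u) (mul t u) :=
  hρ.2 _ _ _ _ h (hρ.1 u)

theorem card_congruence_lt_card_diagonal {S : Type*} [Finite S] {mul : S → S → S}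
    {ρ : S → S → Prop} (hρ : IsDiagonal mul ρ) {s t : S} (hst : ρ s t) (hts : ¬ ρ t s) :
    Nat.card {ρ : S → S → Prop // IsCongruence mul ρ}
      < Nat.card {ρ : S → S → Prop // IsDiagonal mul ρ} := by
  rw [← Nat.card_congr (Equiv.subtypeSubtypeEquivSubtype
    (p := IsDiagonal mul) fun h => ⟨h.1.refl, h.2⟩)]
  exact Finite.card_subtype_lt (x := ⟨ρ, hρ⟩) fun h => hts (h.1.symm hst)

theorem Submonoid.inv_mem_of_finite {G : Type*} [Group G] [Finite G] (S : Submonoid G) {x : G}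
    (hx : x ∈ S) : x⁻¹ ∈ S :=
  Submonoid.powers_le.mpr hx (mem_powers_iff_mem_zpowers.mpr (inv_mem (Subgroup.mem_zpowers x)))

namespace ReesMatrix

variable {I Λ G : Type*} [Group G]

section Normalization

variable (P : Λ → I → G) (i₀ : I) (κ₀ : Λ)

def normalizedCoord (s : I × G × Λ) : G := P κ₀ s.1 * s.2.1 * P s.2.2 i₀

def normalizedMatrix (l : Λ) (i : I) : G := (P l i₀)⁻¹ * P l i * (P κ₀ i)⁻¹

theorem normalizedCoord_rmul (s t : I × G × Λ) :
    normalizedCoord P i₀ κ₀ (rmul P s t) = normalizedCoord P i₀ κ₀ s *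
      normalizedMatrix P i₀ κ₀ s.2.2 t.1 * normalizedCoord P i₀ κ₀ t := by
  simp only [normalizedCoord, normalizedMatrix, rmul]
  group

theorem normalizedCoord_mk (i : I) (g : G) (l : Λ) :
    normalizedCoord P i₀ κ₀ (i, (P κ₀ i)⁻¹ * g * (P l i₀)⁻¹, l) = g := by
  simp only [normalizedCoord]
  group

-- `LinkedI N` and `LinkedΛ N` are the relations `Θ_I(N)` and `Θ_Λ(N)` of the proof idea.
def LinkedI (N : Subgroup G) (i j : I) : Prop :=
  ∀ κ, ((normalizedMatrix P i₀ κ₀ κ i : G) : G ⧸ N) = normalizedMatrix P i₀ κ₀ κ j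

def LinkedΛ (N : Subgroup G) (l m : Λ) : Prop :=
  ∀ k, ((normalizedMatrix P i₀ κ₀ l k : G) : G ⧸ N) = normalizedMatrix P i₀ κ₀ m k

theorem linkedI_equivalence (N : Subgroup G) : Equivalence (LinkedI P i₀ κ₀ N) :=
  ⟨fun _ _ => rfl, fun h κ => (h κ).symm, fun h h' κ => (h κ).trans (h' κ)⟩

theorem linkedΛ_equivalence (N : Subgroup G) : Equivalence (LinkedΛ P i₀ κ₀ N) :=
  ⟨fun _ _ => rfl, fun h k => (h k).symm, fun h h' k => (h k).trans (h' k)⟩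

def tripleRel (N : Subgroup G) (ε : I → I → Prop) (δ : Λ → Λ → Prop) (s t : I × G × Λ) :
    Prop :=
  ε s.1 t.1 ∧ δ s.2.2 t.2.2 ∧ ((normalizedCoord P i₀ κ₀ s : G) : G ⧸ N) = normalizedCoord P i₀ κ₀ t

theorem tripleRel_isCongruence (N : Subgroup G) [N.Normal] {ε : I → I → Prop}
    {δ : Λ → Λ → Prop} (hε : Equivalence ε) (hδ : Equivalence δ) (hεN : ε ≤ LinkedI P i₀ κ₀ N)
    (hδN : δ ≤ LinkedΛ P i₀ κ₀ N) : IsCongruence (rmul P) (tripleRel P i₀ κ₀ N ε δ) := by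
  refine ⟨⟨fun s => ⟨hε.refl _, hδ.refl _, rfl⟩, fun h => ⟨hε.symm h.1, hδ.symm h.2.1, h.2.2.symm⟩,
    fun h h' => ⟨hε.trans h.1 h'.1, hδ.trans h.2.1 h'.2.1, h.2.2.trans h'.2.2⟩⟩, ?_⟩
  rintro s t s' t' ⟨hi, hl, hst⟩ ⟨hi', hl', hst'⟩
  refine ⟨hi, hl', ?_⟩
  have hQ : ((normalizedMatrix P i₀ κ₀ s.2.2 s'.1 : G) : G ⧸ N) =
      normalizedMatrix P i₀ κ₀ t.2.2 t'.1 :=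
    (hδN _ _ hl s'.1).trans (hεN _ _ hi' t.2.2)
  simp only [normalizedCoord_rmul, QuotientGroup.mk_mul, hst, hst', hQ]

theorem tripleRel_mk_iff (N : Subgroup G) (ε : I → I → Prop) (δ : Λ → Λ → Prop) (i j : I)
    (g h : G) (l m : Λ) :
    tripleRel P i₀ κ₀ N ε δ (i, (P κ₀ i)⁻¹ * g * (P l i₀)⁻¹, l) (j, (P κ₀ j)⁻¹ * h * (P m i₀)⁻¹, m)
      ↔ ε i j ∧ δ l m ∧ ((g : G) : G ⧸ N) = h := by
  simp only [tripleRel, normalizedCoord_mk]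

theorem tripleRel_injective {N N' : Subgroup G} {ε ε' : I → I → Prop} {δ δ' : Λ → Λ → Prop}
    (hε : Std.Refl ε) (hε' : Std.Refl ε') (hδ : Std.Refl δ) (hδ' : Std.Refl δ')
    (h : tripleRel P i₀ κ₀ N ε δ = tripleRel P i₀ κ₀ N' ε' δ') : N = N' ∧ ε = ε' ∧ δ = δ' := by
  have probe i j g g' l m := congrFun₂ h (i, (P κ₀ i)⁻¹ * g * (P l i₀)⁻¹, l)
    (j, (P κ₀ j)⁻¹ * g' * (P m i₀)⁻¹, m)
  simp only [tripleRel_mk_iff, eq_iff_iff] at probe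
  refine ⟨?_, ?_, ?_⟩
  · ext n
    simpa [hε.refl, hε'.refl, hδ.refl, hδ'.refl, QuotientGroup.eq] using probe i₀ i₀ 1 n κ₀ κ₀
  · ext i j
    simpa [hε.refl, hε'.refl, hδ.refl, hδ'.refl] using probe i j 1 1 κ₀ κ₀
  · ext l m
    simpa [hε.refl, hε'.refl, hδ.refl, hδ'.refl] using probe i₀ i₀ 1 1 l m

end Normalization

section Shifts

def IsLeftShift (ρ : I × G × Λ → I × G × Λ → Prop) (i j : I) (c : G) : Prop :=
  ∀ w ν, ρ (i, w, ν) (j, c * w, ν)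

def IsRightShift (ρ : I × G × Λ → I × G × Λ → Prop) (l m : Λ) (d : G) : Prop :=
  ∀ k w, ρ (k, w, l) (k, w * d, m)

variable {P : Λ → I → G} {ρ : I × G × Λ → I × G × Λ → Prop}

theorem isLeftShift_of_rel (hρ : IsDiagonal (rmul P) ρ) {i j : I} {x y : G} {l m : Λ}
    (h : ρ (i, x, l) (j, y, m)) (k : I) : IsLeftShift ρ i j (y * P m k * (P l k)⁻¹ * x⁻¹) := by
  intro w ν
  convert hρ.mul_right (k, (P l k)⁻¹ * x⁻¹ * w, ν) h using 3 <;> simp only [rmul] <;> group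

theorem isRightShift_of_rel (hρ : IsDiagonal (rmul P) ρ) {i j : I} {x y : G} {l m : Λ}
    (h : ρ (i, x, l) (j, y, m)) (κ : Λ) : IsRightShift ρ l m (x⁻¹ * (P κ i)⁻¹ * P κ j * y) := by
  intro k w
  convert hρ.mul_left (k, w * x⁻¹ * (P κ i)⁻¹, κ) h using 3 <;> simp only [rmul] <;> group

theorem IsLeftShift.conj (hρ : IsDiagonal (rmul P) ρ) {i j : I} {c : G}
    (hc : IsLeftShift ρ i j c) (k : I) (κ : Λ) (a : G) :
    IsLeftShift ρ k k (a * P κ j * c * (a * P κ i)⁻¹) := by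
  intro w ν
  convert hρ.mul_left (k, a, κ) (hc ((a * P κ i)⁻¹ * w) ν) using 3 <;> simp only [rmul] <;> group

theorem IsRightShift.isLeftShift (hρ : IsDiagonal (rmul P) ρ) {l m : Λ} {d : G}
    (hd : IsRightShift ρ l m d) (k' k : I) (a : G) :
    IsLeftShift ρ k' k' (a * d * P m k * (a * P l k)⁻¹) := by
  intro w ν
  convert hρ.mul_right (k, (a * P l k)⁻¹ * w, ν) (hd k' a) using 3 <;> simp only [rmul] <;> group

theorem IsLeftShift.mul (hρ : IsDiagonal (rmul P) ρ) {i j k : I} {c n : G}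
    (hc : IsLeftShift ρ i j c) (hn : IsLeftShift ρ k k n) : IsLeftShift ρ i j (c * n) := by
  intro w ν
  convert hρ.2 _ _ _ _ (hc (P ν k)⁻¹ ν) (hn w ν) using 3 <;> simp only [rmul] <;> group

theorem rel_of_isLeftShift_of_isRightShift (hρ : IsDiagonal (rmul P) ρ) {i j : I} {l m : Λ}
    {c d : G} (hc : IsLeftShift ρ i j c) (hd : IsRightShift ρ l m d) (x : G) :
    ρ (i, x, l) (j, c * x * d, m) := by
  convert hρ.2 _ _ _ _ (hc x l) (hd i (P l i)⁻¹) using 3 <;> simp only [rmul] <;> group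

def leftShiftRel (ρ : I × G × Λ → I × G × Λ → Prop) (i j : I) : Prop := ∃ c, IsLeftShift ρ i j c

def rightShiftRel (ρ : I × G × Λ → I × G × Λ → Prop) (l m : Λ) : Prop :=
  ∃ d, IsRightShift ρ l m d

theorem leftShiftRel_refl (hρ : IsDiagonal (rmul P) ρ) : Std.Refl (leftShiftRel ρ) :=
  ⟨fun i => ⟨1, fun w ν => by simpa using hρ.1 (i, w, ν)⟩⟩

theorem rightShiftRel_refl (hρ : IsDiagonal (rmul P) ρ) : Std.Refl (rightShiftRel ρ) :=
  ⟨fun l => ⟨1, fun k w => by simpa using hρ.1 (k, w, l)⟩⟩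

end Shifts

section Classification

variable {P : Λ → I → G} {ρ : I × G × Λ → I × G × Λ → Prop}

def shiftSubmonoid (hρ : IsDiagonal (rmul P) ρ) : Submonoid G where
  carrier := {n | ∀ k, IsLeftShift ρ k k n}
  one_mem' k w ν := by simpa using hρ.1 (k, w, ν)
  mul_mem' hn hn' k := (hn k).mul hρ (hn' k)

variable [Finite G]

def shiftSubgroup (hρ : IsDiagonal (rmul P) ρ) : Subgroup G :=
  { shiftSubmonoid hρ with inv_mem' := (shiftSubmonoid hρ).inv_mem_of_finite }

instance shiftSubgroup_normal (hρ : IsDiagonal (rmul P) ρ) : (shiftSubgroup hρ).Normal :=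
  ⟨fun n hn g k w ν => by convert (hn k).conj hρ k ν (g * (P ν k)⁻¹) w ν using 2; group⟩

theorem IsLeftShift.mk_eq (hρ : IsDiagonal (rmul P) ρ) {i j : I} {c : G}
    (hc : IsLeftShift ρ i j c) (κ : Λ) :
    ((P κ i : G) : G ⧸ shiftSubgroup hρ) = (P κ j * c : G) :=
  QuotientGroup.eq.mpr fun k => by convert hc.conj hρ k κ (P κ i)⁻¹ using 1; group

theorem IsRightShift.mk_eq (hρ : IsDiagonal (rmul P) ρ) {l m : Λ} {d : G}
    (hd : IsRightShift ρ l m d) (k : I) :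
    ((P l k : G) : G ⧸ shiftSubgroup hρ) = (d * P m k : G) :=
  QuotientGroup.eq.mpr fun k' => by convert hd.isLeftShift hρ k' k (P l k)⁻¹ using 1; group

variable (i₀ : I) (κ₀ : Λ)

theorem leftShiftRel_le_linkedI (hρ : IsDiagonal (rmul P) ρ) :
    leftShiftRel ρ ≤ LinkedI P i₀ κ₀ (shiftSubgroup hρ) := by
  rintro i j ⟨c, hc⟩ κ
  simp only [normalizedMatrix, QuotientGroup.mk_mul, QuotientGroup.mk_inv, hc.mk_eq hρ]
  group

theorem rightShiftRel_le_linkedΛ (hρ : IsDiagonal (rmul P) ρ) :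
    rightShiftRel ρ ≤ LinkedΛ P i₀ κ₀ (shiftSubgroup hρ) := by
  rintro l m ⟨d, hd⟩ k
  simp only [normalizedMatrix, QuotientGroup.mk_mul, QuotientGroup.mk_inv, hd.mk_eq hρ]
  group

theorem eq_tripleRel (hρ : IsDiagonal (rmul P) ρ) :
    ρ = tripleRel P i₀ κ₀ (shiftSubgroup hρ) (leftShiftRel ρ) (rightShiftRel ρ) := by
  ext ⟨i, x, l⟩ ⟨j, y, m⟩
  constructor
  · intro h
    refine ⟨⟨_, isLeftShift_of_rel hρ h i₀⟩, ⟨_, isRightShift_of_rel hρ h κ₀⟩, ?_⟩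
    simp only [normalizedCoord, QuotientGroup.mk_mul, QuotientGroup.mk_inv,
      (isLeftShift_of_rel hρ h i₀).mk_eq hρ κ₀]
    group
  · rintro ⟨⟨c, hc⟩, ⟨d, hd⟩, hF⟩
    have hy : ((y : G) : G ⧸ shiftSubgroup hρ) = c * x * d := by
      have hy' : ((y : G) : G ⧸ shiftSubgroup hρ) = ((P κ₀ j : G) : G ⧸ shiftSubgroup hρ)⁻¹ *
          normalizedCoord P i₀ κ₀ (j, y, m) * ((P m i₀ : G) : G ⧸ shiftSubgroup hρ)⁻¹ := by
        simp only [normalizedCoord, QuotientGroup.mk_mul]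
        group
      rw [hy', ← hF]
      simp only [normalizedCoord, QuotientGroup.mk_mul, hc.mk_eq hρ κ₀, hd.mk_eq hρ i₀]
      group
    have hn : c⁻¹ * y * d⁻¹ * x⁻¹ ∈ shiftSubgroup hρ := by
      rw [← QuotientGroup.eq_one_iff]
      simp only [QuotientGroup.mk_mul, QuotientGroup.mk_inv, hy]
      group
    convert rel_of_isLeftShift_of_isRightShift hρ (hc.mul hρ (hn i)) hd x using 3
    group

end Classification

section Counting

variable (P : Λ → I → G) (i₀ : I) (κ₀ : Λ) [Finite G]

def diagToCong
    (t : {ρ : I × G × Λ → I × G × Λ → Prop // IsDiagonal (rmul P) ρ} ×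
      {ε : I → I → Prop // Equivalence ε} × {δ : Λ → Λ → Prop // Equivalence δ}) :
    {ρ : I × G × Λ → I × G × Λ → Prop // IsCongruence (rmul P) ρ} ×
      {r : I → I → Prop // Std.Refl r} × {r : Λ → Λ → Prop // Std.Refl r} :=
  let N := shiftSubgroup t.1.2
  (⟨tripleRel P i₀ κ₀ N (t.2.1.1 ⊓ LinkedI P i₀ κ₀ N) (t.2.2.1 ⊓ LinkedΛ P i₀ κ₀ N),
      tripleRel_isCongruence P i₀ κ₀ N (t.2.1.2.inf (linkedI_equivalence P i₀ κ₀ N))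
        (t.2.2.2.inf (linkedΛ_equivalence P i₀ κ₀ N)) inf_le_right inf_le_right⟩,
    ⟨leftShiftRel t.1.1 ⊔ t.2.1.1 \ LinkedI P i₀ κ₀ N,
      ⟨fun i => Or.inl ((leftShiftRel_refl t.1.2).refl i)⟩⟩,
    ⟨rightShiftRel t.1.1 ⊔ t.2.2.1 \ LinkedΛ P i₀ κ₀ N,
      ⟨fun l => Or.inl ((rightShiftRel_refl t.1.2).refl l)⟩⟩)

theorem diagToCong_injective : Function.Injective (diagToCong P i₀ κ₀) := by
  rintro ⟨⟨ρ, hρ⟩, ⟨ε, hε⟩, ⟨δ, hδ⟩⟩ ⟨⟨ρ', hρ'⟩, ⟨ε', hε'⟩, ⟨δ', hδ'⟩⟩ h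
  simp only [diagToCong, Prod.mk.injEq, Subtype.mk.injEq] at h
  obtain ⟨hcong, hI, hΛ⟩ := h
  obtain ⟨hN, hεN, hδN⟩ := tripleRel_injective P i₀ κ₀
    ⟨fun i => ⟨hε.refl i, fun _ => rfl⟩⟩ ⟨fun i => ⟨hε'.refl i, fun _ => rfl⟩⟩
    ⟨fun l => ⟨hδ.refl l, fun _ => rfl⟩⟩ ⟨fun l => ⟨hδ'.refl l, fun _ => rfl⟩⟩ hcong
  rw [← hN] at hεN hδN hI hΛ
  obtain ⟨hRI, rfl⟩ := eq_and_eq_of_inf_eq_of_sup_sdiff_eq (leftShiftRel_le_linkedI i₀ κ₀ hρ)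
    (hN ▸ leftShiftRel_le_linkedI i₀ κ₀ hρ') hεN hI
  obtain ⟨hRL, rfl⟩ := eq_and_eq_of_inf_eq_of_sup_sdiff_eq (rightShiftRel_le_linkedΛ i₀ κ₀ hρ)
    (hN ▸ rightShiftRel_le_linkedΛ i₀ κ₀ hρ') hδN hΛ
  obtain rfl : ρ = ρ' := by rw [eq_tripleRel i₀ κ₀ hρ, eq_tripleRel i₀ κ₀ hρ', hN, hRI, hRL]
  rfl

theorem bell_mul_card_diagonal_le [Fintype I] [Nonempty I] [Fintype Λ] [Nonempty Λ] :
    bell (Fintype.card I) * bell (Fintype.card Λ) *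
        Nat.card {ρ : I × G × Λ → I × G × Λ → Prop // IsDiagonal (rmul P) ρ} ≤
      Nat.card {ρ : I × G × Λ → I × G × Λ → Prop // IsCongruence (rmul P) ρ} *
        (2 ^ (Fintype.card I ^ 2 - Fintype.card I) *
          2 ^ (Fintype.card Λ ^ 2 - Fintype.card Λ)) := by
  obtain ⟨i₀⟩ := ‹Nonempty I›
  obtain ⟨κ₀⟩ := ‹Nonempty Λ›
  have := Nat.card_le_card_of_injective _ (diagToCong_injective P i₀ κ₀)
  rwa [Nat.card_prod, Nat.card_prod, Nat.card_prod, Nat.card_prod, card_equivalence_eq_bell,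
    card_equivalence_eq_bell, card_refl_eq_two_pow, card_refl_eq_two_pow, mul_comm] at this

theorem card_congruence_lt_card_diagonal_rmul [Finite I] [Nontrivial I] [Finite Λ] [Nonempty Λ] :
    Nat.card {ρ : I × G × Λ → I × G × Λ → Prop // IsCongruence (rmul P) ρ} <
      Nat.card {ρ : I × G × Λ → I × G × Λ → Prop // IsDiagonal (rmul P) ρ} := by
  obtain ⟨a₀, a₁, hne⟩ := exists_pair_ne I
  obtain ⟨κ⟩ := ‹Nonempty Λ›
  exact card_congruence_lt_card_diagonal (ρ := fun s t => s.1 = t.1 ∨ s.1 = a₀)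
    ⟨fun _ => Or.inl rfl, fun _ _ _ _ h _ => h⟩ (s := (a₀, 1, κ)) (t := (a₁, 1, κ))
    (Or.inr rfl) (by simp [hne.symm])

end Counting

end ReesMatrix

/-- For a finite Rees matrix semigroup with `|I| = a > 1`, `|Λ| = b > 1`:
`B(a)B(b)/(2^(a²−a) 2^(b²−b)) ≤ χ(M[G;I,Λ;P]) < 1`. -/
theorem stmt15 {I Λ : Type*} [Fintype I] [Fintype Λ] (a b : ℕ)
    (ha : Fintype.card I = a) (hb : Fintype.card Λ = b)
    (ha1 : 1 < a) (hb1 : 1 < b)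
    (G : Type*) [Group G] [Fintype G] (P : Λ → I → G) :
    ((bell a : ℚ) * bell b) / (2 ^ (a ^ 2 - a) * 2 ^ (b ^ 2 - b)) ≤ chi (rmul P) ∧
    chi (rmul P) < 1 := by
  have : Nonempty I := Fintype.card_pos_iff.mp (by omega)
  have : Nonempty Λ := Fintype.card_pos_iff.mp (by omega)
  have : Nontrivial I := Fintype.one_lt_card_iff_nontrivial.mp (ha ▸ ha1)
  have hlt := ReesMatrix.card_congruence_lt_card_diagonal_rmul P
  have hle := ReesMatrix.bell_mul_card_diagonal_le P
  rw [ha, hb] at hle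
  have hpos := (Nat.zero_le _).trans_lt hlt
  rw [chi, div_le_div_iff₀ (by positivity) (by exact_mod_cast hpos),
    div_lt_one (by exact_mod_cast hpos)]
  exact ⟨by exact_mod_cast hle, by exact_mod_cast hlt⟩
end

section
/- Let I and Λ be finite sets of sizes a > 1 and b > 1, let p be a prime with p > 2^(ab+1), let k ∈ ℕ₀ and 0 ≤ r ≤ k, let G = ℤ/p^kℤ, and let P be any Λ×I matrix whose ab entries are exactly the residues of p^r, 2p^r, 2²p^r, …, 2^(ab−1)p^r modulo p^k (each occurring once). Then χ(M[G;I,Λ;P]) = ((r+1)·B(a)·B(b) + k − r) / ((r+1)·2^(a²−a)·2^(b²−b) + k − r). -/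
/-- Multiplication of the Rees matrix semigroup `M[A;I,Λ;P]` over an additively
written group `A`: `(i,g,λ)(j,h,μ) = (i, g + p_{λ j} + h, μ)`. -/
def rmulAdd {A I Λ : Type*} [AddGroup A] (P : Λ → I → A) (x y : I × A × Λ) : I × A × Λ :=
  ⟨x.1, x.2.1 + P x.2.2 y.1 + y.2.1, y.2.2⟩


section Aux

variable {I Λ : Type*} {m : ℕ} [NeZero m]

def ccc (P : Λ → I → ZMod m) (i0 : I) (l0 : Λ) (l : Λ) (i : I) : ZMod m :=
  P l i - P l0 i - P l i0 + P l0 i0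

def phiF (P : Λ → I → ZMod m) (i0 : I) (l0 : Λ) (x : I × ZMod m × Λ) : ZMod m :=
  P l0 x.1 + x.2.1 + P x.2.2 i0

abbrev TrT (I Λ : Type*) (m : ℕ) :=
  AddSubgroup (ZMod m) × (I → I → Prop) × (Λ → Λ → Prop)

def CondT (P : Λ → I → ZMod m) (i0 : I) (l0 : Λ) (t : TrT I Λ m) : Prop :=
  (∀ i, t.2.1 i i) ∧ (∀ l, t.2.2 l l) ∧
  (∀ i j, t.2.1 i j → ∀ l, ccc P i0 l0 l i - ccc P i0 l0 l j ∈ t.1) ∧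
  (∀ l l', t.2.2 l l' → ∀ i, ccc P i0 l0 l i - ccc P i0 l0 l' i ∈ t.1)

def FF (P : Λ → I → ZMod m) (i0 : I) (l0 : Λ) (t : TrT I Λ m)
    (x y : I × ZMod m × Λ) : Prop :=
  t.2.1 x.1 y.1 ∧ t.2.2 x.2.2 y.2.2 ∧ phiF P i0 l0 x - phiF P i0 l0 y ∈ t.1

variable (P : Λ → I → ZMod m) (i0 : I) (l0 : Λ)

lemma nmul_mem (N : AddSubgroup (ZMod m)) (g : ZMod m) {x : ZMod m} (hx : x ∈ N) :
    g * x ∈ N := by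
  have : g * x = g.val • x := by rw [nsmul_eq_mul, ZMod.natCast_val, ZMod.cast_id]
  rw [this]
  exact AddSubgroup.nsmul_mem N hx _

lemma phiF_mul (x y : I × ZMod m × Λ) :
    phiF P i0 l0 (rmulAdd P x y) =
      phiF P i0 l0 x + phiF P i0 l0 y + (ccc P i0 l0 x.2.2 y.1 - P l0 i0) := by
  simp only [phiF, rmulAdd, ccc]
  ring

lemma FF_isDiagonal {t : TrT I Λ m} (ht : CondT P i0 l0 t) :
    IsDiagonal (rmulAdd P) (FF P i0 l0 t) := by
  obtain ⟨hrI, hrL, hlI, hlL⟩ := ht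
  constructor
  · intro s
    exact ⟨hrI _, hrL _, by rw [sub_self]; exact zero_mem _⟩
  · rintro x x' y y' ⟨h1, h2, h3⟩ ⟨h4, h5, h6⟩
    refine ⟨h1, h5, ?_⟩
    have key : phiF P i0 l0 (rmulAdd P x y) - phiF P i0 l0 (rmulAdd P x' y') =
        (phiF P i0 l0 x - phiF P i0 l0 x') + ((phiF P i0 l0 y - phiF P i0 l0 y') +
        ((ccc P i0 l0 x.2.2 y.1 - ccc P i0 l0 x.2.2 y'.1) +
         (ccc P i0 l0 x.2.2 y'.1 - ccc P i0 l0 x'.2.2 y'.1))) := by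
      rw [phiF_mul, phiF_mul]; ring
    rw [key]
    exact AddSubgroup.add_mem _ h3 (AddSubgroup.add_mem _ h6
      (AddSubgroup.add_mem _ (hlI _ _ h4 _) (hlL _ _ h2 _)))

end Aux

section Aux2

variable {I Λ : Type*} {m : ℕ} [NeZero m]
variable (P : Λ → I → ZMod m) (i0 : I) (l0 : Λ)

lemma exists_trip (ρ : (I × ZMod m × Λ) → (I × ZMod m × Λ) → Prop)
    (hρ : IsDiagonal (rmulAdd P) ρ) :
    ∃ t : TrT I Λ m, CondT P i0 l0 t ∧ FF P i0 l0 t = ρ := by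
  classical
  obtain ⟨hrefl, hcomp⟩ := hρ
  -- recasting helper
  have RQ : ∀ {x1 y1 : I} {u v u' v' : ZMod m} {x3 y3 : Λ}, u = u' → v = v' →
      ρ (x1, u, x3) (y1, v, y3) → ρ (x1, u', x3) (y1, v', y3) := by
    rintro _ _ _ _ _ _ _ _ rfl rfl h; exact h
  -- translation
  have Tgen : ∀ (t x y : ZMod m), ρ (i0, x, l0) (i0, y, l0) →
      ρ (i0, x + t, l0) (i0, y + t, l0) := by
    intro t x y h
    have h2 := hcomp (i0, t - P l0 i0, l0) (i0, t - P l0 i0, l0) _ _ (hrefl _) h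
    simp only [rmulAdd] at h2
    exact RQ (by ring) (by ring) h2
  -- the subgroup
  have Tadd : ∀ d e : ZMod m, ρ (i0, 0, l0) (i0, d, l0) → ρ (i0, 0, l0) (i0, e, l0) →
      ρ (i0, 0, l0) (i0, d + e, l0) := by
    intro d e h1 h2
    have h3 := hcomp _ _ _ _ h1 h2
    simp only [rmulAdd] at h3
    have h4 := Tgen (-(P l0 i0)) _ _ h3
    exact RQ (by ring) (by ring) h4
  have Tsmul : ∀ (n : ℕ) (d : ZMod m), ρ (i0, 0, l0) (i0, d, l0) →
      ρ (i0, 0, l0) (i0, n • d, l0) := by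
    intro n d h
    induction n with
    | zero => exact RQ rfl (by rw [zero_smul]) (hrefl _)
    | succ n ih =>
      have := Tadd _ _ ih h
      exact RQ rfl (by rw [succ_nsmul]) this
  have Tneg : ∀ d : ZMod m, ρ (i0, 0, l0) (i0, d, l0) → ρ (i0, 0, l0) (i0, -d, l0) := by
    intro d h
    have hpos : 0 < addOrderOf d := addOrderOf_pos d
    have h1 := Tsmul (addOrderOf d - 1) d h
    have h2 : (addOrderOf d - 1) • d = -d := by
      have h3 : (addOrderOf d - 1 + 1) • d = 0 := by
        rw [Nat.sub_add_cancel hpos, addOrderOf_nsmul_eq_zero]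
      rw [succ_nsmul] at h3
      linear_combination (norm := abel) h3
    exact RQ rfl h2 h1
  set N : AddSubgroup (ZMod m) :=
    { carrier := {d | ρ (i0, 0, l0) (i0, d, l0)}
      zero_mem' := hrefl _
      add_mem' := fun h1 h2 => Tadd _ _ h1 h2
      neg_mem' := fun h => Tneg _ h } with hN
  have memN : ∀ d : ZMod m, d ∈ N ↔ ρ (i0, 0, l0) (i0, d, l0) := fun d => Iff.rfl
  -- forward lemma
  have K : ∀ x y, ρ x y → phiF P i0 l0 y - phiF P i0 l0 x ∈ N := by
    intro x y h
    obtain ⟨x1, x2, x3⟩ := x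
    obtain ⟨y1, y2, y3⟩ := y
    have h1 := hcomp _ _ _ _ h (hrefl (i0, 0, l0))
    have h2 := hcomp (i0, 0, l0) (i0, 0, l0) _ _ (hrefl _) h1
    simp only [rmulAdd] at h2
    have h3 := Tgen (-(0 + P l0 x1 + (x2 + P x3 i0 + 0))) _ _ h2
    rw [memN]
    exact RQ (by ring) (by simp only [phiF]; ring) h3
  -- the I- and Λ-relations
  set gI : I → ZMod m := fun i => - P l0 i - P l0 i0 with hgI
  set gL : Λ → ZMod m := fun l => - P l0 i0 - P l i0 with hgL
  set RI : I → I → Prop := fun i j => ρ (i, gI i, l0) (j, gI j, l0) with hRI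
  set RL : Λ → Λ → Prop := fun l l' => ρ (i0, gL l, l) (i0, gL l', l') with hRL
  have pairN : ∀ (c n : ZMod m), n ∈ N → ρ (i0, c, l0) (i0, n + c, l0) := by
    intro c n hn
    have := Tgen c _ _ ((memN n).mp hn)
    exact RQ (by ring) rfl this
  refine ⟨(N, RI, RL), ⟨fun i => hrefl _, fun l => hrefl _, ?_, ?_⟩, ?_⟩
  · -- linkI
    intro i j hij l
    have h2 := hcomp (i0, 0, l) (i0, 0, l) _ _ (hrefl _) hij
    simp only [rmulAdd] at h2
    have h3 := K _ _ h2
    have h4 := N.neg_mem h3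
    have e1 : ccc P i0 l0 l i - ccc P i0 l0 l j =
        -(phiF P i0 l0 (i0, 0 + P l j + gI j, l0) - phiF P i0 l0 (i0, 0 + P l i + gI i, l0)) := by
      simp only [phiF, ccc, hgI]; ring
    rw [e1]; exact h4
  · -- linkL
    intro l l' hll i
    have h2 := hcomp _ _ (i, 0, l0) (i, 0, l0) hll (hrefl _)
    simp only [rmulAdd] at h2
    have h3 := K _ _ h2
    have h4 := N.neg_mem h3
    have e1 : ccc P i0 l0 l i - ccc P i0 l0 l' i =
        -(phiF P i0 l0 (i0, gL l' + P l' i + 0, l0) - phiF P i0 l0 (i0, gL l + P l i + 0, l0)) := by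
      simp only [phiF, hgL, ccc]; ring
    rw [e1]; exact h4
  · -- FF = ρ
    funext x y
    obtain ⟨x1, x2, x3⟩ := x
    obtain ⟨y1, y2, y3⟩ := y
    apply propext
    constructor
    · rintro ⟨h1, h2, h3⟩
      -- build ρ (x1,x2,x3) (y1,y2,y3) from the triple conditions
      have hn : phiF P i0 l0 (y1, y2, y3) - phiF P i0 l0 (x1, x2, x3) ∈ N := by
        have := N.neg_mem h3; rwa [neg_sub] at this
      set c : ZMod m := x2 - gI x1 - P l0 i0 - P l0 i0 - gL x3 with hc
      have hB := pairN c _ hn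
      have hAB := hcomp _ _ _ _ h1 hB
      have hABC := hcomp _ _ _ _ hAB h2
      simp only [rmulAdd] at hABC
      exact RQ (by simp only [hc, phiF, hgI, hgL]; ring)
        (by simp only [hc, phiF, hgI, hgL]; ring) hABC
    · intro h
      have hphi : phiF P i0 l0 (x1, x2, x3) - phiF P i0 l0 (y1, y2, y3) ∈ N := by
        have := N.neg_mem (K _ _ h); rwa [neg_sub] at this
      refine ⟨?_, ?_, hphi⟩
      · -- RI x1 y1
        have h1 := hcomp _ _ _ _ h (hrefl (i0, 0, l0))
        have hB := pairN (gI x1 - (x2 + P x3 i0 + 0) - P l0 i0) _ hphi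
        have h3 := hcomp _ _ _ _ h1 hB
        simp only [rmulAdd] at h3
        exact RQ (by simp only [phiF]; ring) (by simp only [phiF]; ring) h3
      · -- RL x3 y3
        have hB := pairN (gL x3 - P l0 x1 - x2) _ hphi
        have h3 := hcomp _ _ _ _ hB h
        simp only [rmulAdd] at h3
        exact RQ (by simp only [phiF]; ring) (by simp only [phiF]; ring) h3

end Aux2

section Aux3

variable {I Λ : Type*} {m : ℕ} [NeZero m]
variable (P : Λ → I → ZMod m) (i0 : I) (l0 : Λ)

lemma FF_inj {t t' : TrT I Λ m} (ht : CondT P i0 l0 t) (ht' : CondT P i0 l0 t')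
    (h : FF P i0 l0 t = FF P i0 l0 t') : t = t' := by
  have hF : ∀ x y, FF P i0 l0 t x y ↔ FF P i0 l0 t' x y := fun x y => by rw [h]
  have hNiff : ∀ d : ZMod m, d ∈ t.1 ↔ d ∈ t'.1 := by
    intro d
    have h1 := hF (i0, 0, l0) (i0, d, l0)
    simp only [FF] at h1
    have e0 : phiF P i0 l0 (i0, (0:ZMod m), l0) - phiF P i0 l0 (i0, d, l0) = -d := by
      simp only [phiF]; ring
    rw [e0] at h1
    constructor
    · intro hd
      have := (h1.mp ⟨ht.1 _, ht.2.1 _, t.1.neg_mem hd⟩).2.2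
      simpa using t'.1.neg_mem this
    · intro hd
      have := (h1.mpr ⟨ht'.1 _, ht'.2.1 _, t'.1.neg_mem hd⟩).2.2
      simpa using t.1.neg_mem this
  have hRIiff : ∀ i j, t.2.1 i j ↔ t'.2.1 i j := by
    intro i j
    have h1 := hF (i, - P l0 i - P l0 i0, l0) (j, - P l0 j - P l0 i0, l0)
    simp only [FF] at h1
    have e0 : phiF P i0 l0 (i, - P l0 i - P l0 i0, l0) -
        phiF P i0 l0 (j, - P l0 j - P l0 i0, l0) = 0 := by simp only [phiF]; ring
    rw [e0] at h1
    constructor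
    · intro hd; exact (h1.mp ⟨hd, ht.2.1 _, zero_mem _⟩).1
    · intro hd; exact (h1.mpr ⟨hd, ht'.2.1 _, zero_mem _⟩).1
  have hRLiff : ∀ l l', t.2.2 l l' ↔ t'.2.2 l l' := by
    intro l l'
    have h1 := hF (i0, - P l0 i0 - P l i0, l) (i0, - P l0 i0 - P l' i0, l')
    simp only [FF] at h1
    have e0 : phiF P i0 l0 (i0, - P l0 i0 - P l i0, l) -
        phiF P i0 l0 (i0, - P l0 i0 - P l' i0, l') = 0 := by simp only [phiF]; ring
    rw [e0] at h1
    constructor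
    · intro hd; exact (h1.mp ⟨ht.1 _, hd, zero_mem _⟩).2.1
    · intro hd; exact (h1.mpr ⟨ht'.1 _, hd, zero_mem _⟩).2.1
  refine Prod.ext ?_ (Prod.ext ?_ ?_)
  · exact AddSubgroup.ext hNiff
  · funext i j; exact propext (hRIiff i j)
  · funext l l'; exact propext (hRLiff l l')

lemma FF_equivalence_iff {t : TrT I Λ m} (ht : CondT P i0 l0 t) :
    Equivalence (FF P i0 l0 t) ↔ Equivalence t.2.1 ∧ Equivalence t.2.2 := by
  constructor
  · intro hE
    have mkI : ∀ i j, t.2.1 i j → FF P i0 l0 t (i, - P l0 i - P l0 i0, l0)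
        (j, - P l0 j - P l0 i0, l0) := by
      intro i j hij
      refine ⟨hij, ht.2.1 _, ?_⟩
      have e0 : phiF P i0 l0 (i, - P l0 i - P l0 i0, l0) -
          phiF P i0 l0 (j, - P l0 j - P l0 i0, l0) = 0 := by simp only [phiF]; ring
      rw [e0]; exact zero_mem _
    have mkL : ∀ l l', t.2.2 l l' → FF P i0 l0 t (i0, - P l0 i0 - P l i0, l)
        (i0, - P l0 i0 - P l' i0, l') := by
      intro l l' hll
      refine ⟨ht.1 _, hll, ?_⟩
      have e0 : phiF P i0 l0 (i0, - P l0 i0 - P l i0, l) -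
          phiF P i0 l0 (i0, - P l0 i0 - P l' i0, l') = 0 := by simp only [phiF]; ring
      rw [e0]; exact zero_mem _
    constructor
    · exact ⟨ht.1, fun h => (hE.symm (mkI _ _ h)).1, fun h h' => (hE.trans (mkI _ _ h) (mkI _ _ h')).1⟩
    · exact ⟨ht.2.1, fun h => (hE.symm (mkL _ _ h)).2.1, fun h h' => (hE.trans (mkL _ _ h) (mkL _ _ h')).2.1⟩
  · rintro ⟨hI, hL⟩
    refine ⟨fun x => ⟨hI.refl _, hL.refl _, by rw [sub_self]; exact zero_mem _⟩, ?_, ?_⟩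
    · rintro x y ⟨h1, h2, h3⟩
      refine ⟨hI.symm h1, hL.symm h2, ?_⟩
      have := t.1.neg_mem h3; rwa [neg_sub] at this
    · rintro x y z ⟨h1, h2, h3⟩ ⟨h4, h5, h6⟩
      refine ⟨hI.trans h1 h4, hL.trans h2 h5, ?_⟩
      have := t.1.add_mem h3 h6
      rwa [sub_add_sub_cancel] at this

noncomputable def equivDiag :
    {t : TrT I Λ m // CondT P i0 l0 t} ≃
      {ρ : (I × ZMod m × Λ) → (I × ZMod m × Λ) → Prop // IsDiagonal (rmulAdd P) ρ} := by
  apply Equiv.ofBijective (fun t => ⟨FF P i0 l0 t.1, FF_isDiagonal P i0 l0 t.2⟩)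
  constructor
  · rintro ⟨t, ht⟩ ⟨t', ht'⟩ h
    exact Subtype.ext (FF_inj P i0 l0 ht ht' (congrArg Subtype.val h))
  · rintro ⟨ρ, hρ⟩
    obtain ⟨t, ht, hFt⟩ := exists_trip P i0 l0 ρ hρ
    exact ⟨⟨t, ht⟩, Subtype.ext hFt⟩

noncomputable def equivCong :
    {t : TrT I Λ m // CondT P i0 l0 t ∧ Equivalence t.2.1 ∧ Equivalence t.2.2} ≃
      {ρ : (I × ZMod m × Λ) → (I × ZMod m × Λ) → Prop // IsCongruence (rmulAdd P) ρ} := by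
  apply Equiv.ofBijective (fun t =>
    ⟨FF P i0 l0 t.1, (FF_equivalence_iff P i0 l0 t.2.1).mpr t.2.2,
      (FF_isDiagonal P i0 l0 t.2.1).2⟩)
  constructor
  · rintro ⟨t, ht⟩ ⟨t', ht'⟩ h
    exact Subtype.ext (FF_inj P i0 l0 ht.1 ht'.1 (congrArg Subtype.val h))
  · rintro ⟨ρ, hρ⟩
    have hρd : IsDiagonal (rmulAdd P) ρ := ⟨fun s => hρ.1.refl s, hρ.2⟩
    obtain ⟨t, ht, hFt⟩ := exists_trip P i0 l0 ρ hρd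
    have hE : Equivalence (FF P i0 l0 t) := hFt ▸ hρ.1
    exact ⟨⟨t, ht, (FF_equivalence_iff P i0 l0 ht).mp hE⟩, Subtype.ext hFt⟩

end Aux3

section Counting

lemma card_reflrel (α : Type*) [Fintype α] :
    Nat.card {R : α → α → Prop // ∀ x, R x x} =
      2 ^ (Fintype.card α ^ 2 - Fintype.card α) := by
  classical
  have e : {R : α → α → Prop // ∀ x, R x x} ≃ ({x : α × α // x.1 ≠ x.2} → Prop) :=
    { toFun := fun R x => R.1 x.1.1 x.1.2
      invFun := fun f => ⟨fun i j => if h : i = j then True else f ⟨(i, j), h⟩,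
        fun i => by simp⟩
      left_inv := by
        rintro ⟨R, hR⟩
        ext i j
        simp only
        split
        · rename_i h; subst h; simp [hR i]
        · rfl
      right_inv := by
        intro f
        funext x
        obtain ⟨⟨i, j⟩, hij⟩ := x
        simp [dif_neg hij] }
  rw [Nat.card_congr e, Nat.card_fun, Nat.card_eq_fintype_card (α := Prop),
    Nat.card_eq_fintype_card]
  have : Fintype.card {x : α × α // x.1 ≠ x.2} = Fintype.card α ^ 2 - Fintype.card α := by
    rw [Fintype.card_subtype_compl, Fintype.card_prod, sq]
    congr 1
    have ed : {x : α × α // x.1 = x.2} ≃ α :=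
      { toFun := fun x => x.1.1
        invFun := fun a => ⟨(a, a), rfl⟩
        left_inv := by rintro ⟨⟨i, j⟩, h⟩; cases h; rfl
        right_inv := fun a => rfl }
    exact Fintype.card_congr ed
  rw [this]
  simp [Fintype.card_prop]

lemma card_eqvrel (α : Type*) [Fintype α] :
    Nat.card {R : α → α → Prop // Equivalence R} = bell (Fintype.card α) := by
  classical
  have e1 : {R : α → α → Prop // Equivalence R} ≃ Setoid α :=
    { toFun := fun R => ⟨R.1, R.2⟩
      invFun := fun s => ⟨s.r, s.iseqv⟩
      left_inv := fun R => rfl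
      right_inv := fun s => rfl }
  have e0 : α ≃ Fin (Fintype.card α) := Fintype.equivFin α
  have e2 : Setoid α ≃ Setoid (Fin (Fintype.card α)) :=
    { toFun := fun s => s.comap e0.symm
      invFun := fun s => s.comap e0
      left_inv := fun s => Setoid.ext fun x y => by
        show s.r (e0.symm (e0 x)) (e0.symm (e0 y)) ↔ s.r x y
        rw [e0.symm_apply_apply, e0.symm_apply_apply]
      right_inv := fun s => Setoid.ext fun x y => by
        show s.r (e0 (e0.symm x)) (e0 (e0.symm y)) ↔ s.r x y
        rw [e0.apply_symm_apply, e0.apply_symm_apply] }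
  rw [Nat.card_congr (e1.trans e2)]
  rfl

end Counting

section Subgroups

lemma mem_zmultiples_natCast_iff {m d : ℕ} [NeZero m] (hd : d ∣ m) (x : ZMod m) :
    x ∈ AddSubgroup.zmultiples ((d : ZMod m)) ↔ d ∣ x.val := by
  constructor
  · rintro hx
    obtain ⟨z, hz⟩ := AddSubgroup.mem_zmultiples_iff.mp hx
    have h1 : ((z * d : ℤ) : ZMod m) = x := by
      rw [← hz]; push_cast; rw [zsmul_eq_mul]
    have h2 : ((x.val : ℤ)) = (z * d) % m := by rw [← h1, ZMod.val_intCast]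
    have h3 : (d : ℤ) ∣ (z * d) % m := by
      have : (z * d) % m = z * d - m * ((z * d) / m) := by rw [Int.emod_def]
      rw [this]
      exact dvd_sub ⟨z, by ring⟩ (Dvd.dvd.mul_right (Int.natCast_dvd_natCast.mpr hd) _)
    rw [← h2] at h3
    exact_mod_cast h3
  · intro hdx
    obtain ⟨c, hc⟩ := hdx
    refine AddSubgroup.mem_zmultiples_iff.mpr ⟨c, ?_⟩
    have : ((d * c : ℕ) : ZMod m) = x := by rw [← hc, ZMod.natCast_val, ZMod.cast_id]
    rw [← this, zsmul_eq_mul]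
    push_cast
    ring

end Subgroups

section SubgroupsTwo

lemma zmod_nmul_mem {m : ℕ} [NeZero m] (N : AddSubgroup (ZMod m)) (g : ZMod m)
    {x : ZMod m} (hx : x ∈ N) : g * x ∈ N := nmul_mem N g hx

lemma zmod_subgroup_eq_zmultiples {p : ℕ} (hp : p.Prime) (k : ℕ)
    (N : AddSubgroup (ZMod (p ^ k))) :
    ∃ j ≤ k, N = AddSubgroup.zmultiples (((p ^ j : ℕ) : ZMod (p ^ k))) := by
  haveI : NeZero (p ^ k) := ⟨pow_ne_zero k hp.ne_zero⟩
  classical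
  have hex : ∃ j, j ≤ k ∧ ((p ^ j : ℕ) : ZMod (p ^ k)) ∈ N := by
    exact ⟨k, le_rfl, by rw [ZMod.natCast_self]; exact zero_mem N⟩
  set j := Nat.find hex with hj
  obtain ⟨hjk, hjN⟩ := Nat.find_spec hex
  refine ⟨j, hjk, le_antisymm ?_ ?_⟩
  · -- N ≤ zmultiples
    intro x hx
    by_cases hx0 : x = 0
    · rw [hx0]; exact zero_mem _
    have hv0 : x.val ≠ 0 := fun h => hx0 (ZMod.val_eq_zero x |>.mp h)
    set s := (x.val).factorization p with hs
    set u := x.val / p ^ s with hu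
    have hfac : p ^ s * u = x.val := Nat.ordProj_mul_ordCompl_eq_self x.val p
    have hpu : ¬ p ∣ u := Nat.not_dvd_ordCompl hp hv0
    have hsk : s < k := by
      have h1 : p ^ s ≤ x.val := Nat.le_of_dvd (Nat.pos_of_ne_zero hv0) ⟨u, hfac.symm⟩
      have h2 : x.val < p ^ k := ZMod.val_lt x
      exact (Nat.pow_lt_pow_iff_right hp.one_lt).mp (lt_of_le_of_lt h1 h2)
    -- p^s ∈ N
    have hcop : Nat.Coprime u (p ^ k) :=
      (Nat.Prime.coprime_iff_not_dvd hp).mpr hpu |>.symm.pow_right k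
    have hunit : IsUnit ((u : ZMod (p ^ k))) := (ZMod.isUnit_iff_coprime u (p ^ k)).mpr hcop
    have hxu : ((u : ZMod (p ^ k))) * ((p ^ s : ℕ) : ZMod (p ^ k)) = x := by
      rw [← Nat.cast_mul, mul_comm u, hfac, ZMod.natCast_val, ZMod.cast_id]
    have hpsN : ((p ^ s : ℕ) : ZMod (p ^ k)) ∈ N := by
      have : ((p ^ s : ℕ) : ZMod (p ^ k)) = ↑hunit.unit⁻¹ * x := by
        rw [← hxu, ← mul_assoc, IsUnit.val_inv_mul, one_mul]
      rw [this]
      exact zmod_nmul_mem N _ hx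
    have hjs : j ≤ s := Nat.find_min' hex ⟨hsk.le, hpsN⟩
    -- x ∈ zmultiples p^j
    rw [← hxu, show ((p^s : ℕ) : ZMod (p^k)) = ((p^(s-j) : ℕ) : ZMod (p^k)) * ((p^j : ℕ) : ZMod (p^k)) from ?_]
    · rw [← mul_assoc]
      exact zmod_nmul_mem _ _ (AddSubgroup.mem_zmultiples _)
    · rw [← Nat.cast_mul, ← pow_add, Nat.sub_add_cancel hjs]
  · -- zmultiples ≤ N
    rw [AddSubgroup.zmultiples_le]  -- hope this exists
    exact hjN

end SubgroupsTwo

section SubgroupsThree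

variable {p : ℕ} {k : ℕ}

lemma zmult_mem_pow_iff (hp : p.Prime) {j r : ℕ} (hjk : j ≤ k) (hrk : r ≤ k) :
    ((p ^ r : ℕ) : ZMod (p ^ k)) ∈ AddSubgroup.zmultiples (((p ^ j : ℕ) : ZMod (p ^ k)))
      ↔ j ≤ r := by
  haveI : NeZero (p ^ k) := ⟨pow_ne_zero k hp.ne_zero⟩
  rcases eq_or_lt_of_le hrk with h | h
  · subst h
    simp only [ZMod.natCast_self]
    exact ⟨fun _ => hjk, fun _ => zero_mem _⟩
  · rw [mem_zmultiples_natCast_iff (pow_dvd_pow p hjk),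
      ZMod.val_natCast_of_lt (Nat.pow_lt_pow_right hp.one_lt h)]
    exact Nat.pow_dvd_pow_iff_le_right hp.one_lt

lemma zmult_pow_inj (hp : p.Prime) {j1 j2 : ℕ} (h1 : j1 ≤ k) (h2 : j2 ≤ k)
    (h : AddSubgroup.zmultiples (((p ^ j1 : ℕ) : ZMod (p ^ k))) =
      AddSubgroup.zmultiples (((p ^ j2 : ℕ) : ZMod (p ^ k)))) : j1 = j2 := by
  have a1 : j2 ≤ j1 := by
    rw [← zmult_mem_pow_iff hp h2 h1, ← h]
    exact AddSubgroup.mem_zmultiples _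
  have a2 : j1 ≤ j2 := by
    rw [← zmult_mem_pow_iff hp h1 h2, h]
    exact AddSubgroup.mem_zmultiples _
  omega

noncomputable def esub (hp : p.Prime) (k : ℕ) :
    Fin (k + 1) ≃ AddSubgroup (ZMod (p ^ k)) := by
  apply Equiv.ofBijective
    (fun j : Fin (k+1) => AddSubgroup.zmultiples (((p ^ (j : ℕ) : ℕ) : ZMod (p ^ k))))
  constructor
  · intro j1 j2 h
    exact Fin.ext (zmult_pow_inj hp (Nat.lt_succ_iff.mp j1.2) (Nat.lt_succ_iff.mp j2.2) h)
  · intro N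
    obtain ⟨j, hjk, hN⟩ := zmod_subgroup_eq_zmultiples hp k N
    exact ⟨⟨j, Nat.lt_succ_of_le hjk⟩, hN.symm⟩

lemma esub_mem (hp : p.Prime) {r : ℕ} (hrk : r ≤ k) (j : Fin (k + 1)) :
    ((p ^ r : ℕ) : ZMod (p ^ k)) ∈ esub hp k j ↔ (j : ℕ) ≤ r :=
  zmult_mem_pow_iff hp (Nat.lt_succ_iff.mp j.2) hrk

end SubgroupsThree

section TwoPow

private lemma two_pow_helper {x y z w : ℕ} (hxy : x < y) (hzw : z < w) (hxz : x < z)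
    (h : 2 ^ x + 2 ^ y = 2 ^ z + 2 ^ w) : False := by
  have hd : (2:ℕ) ^ (x+1) ∣ 2 ^ x + 2 ^ y := by
    rw [h]; exact dvd_add (pow_dvd_pow 2 hxz) (pow_dvd_pow 2 (by omega))
  have hd2 : (2:ℕ) ^ (x+1) ∣ 2 ^ x :=
    (Nat.dvd_add_right (pow_dvd_pow 2 (by omega : x + 1 ≤ y))).mp
      (by rwa [Nat.add_comm (2^x) (2^y)] at hd)
  have := Nat.le_of_dvd (pow_pos (by norm_num : (0:ℕ) < 2) x) hd2
  have h2 : (2:ℕ) ^ x < 2 ^ (x+1) := Nat.pow_lt_pow_right (by norm_num) (by omega)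
  omega

private lemma two_pow_add_inj {x y z w : ℕ} (hxy : x < y) (hzw : z < w)
    (h : 2 ^ x + 2 ^ y = 2 ^ z + 2 ^ w) : x = z ∧ y = w := by
  have hxz : x = z := by
    rcases Nat.lt_trichotomy x z with h1 | h1 | h1
    · exact absurd (two_pow_helper hxy hzw h1 h) not_false
    · exact h1
    · exact absurd (two_pow_helper hzw hxy h1 h.symm) not_false
  subst hxz
  have : (2:ℕ) ^ y = 2 ^ w := by omega
  exact ⟨rfl, Nat.pow_right_injective (by norm_num) this⟩

lemma two_pow_four_ne {a1 a2 a3 a4 : ℕ} (h12 : a1 ≠ a2) (h13 : a1 ≠ a3) (h14 : a1 ≠ a4)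
    (h23 : a2 ≠ a3) (h24 : a2 ≠ a4) (h34 : a3 ≠ a4) :
    (2 ^ a1 + 2 ^ a4 : ℕ) ≠ 2 ^ a2 + 2 ^ a3 := by
  intro h
  rcases Nat.lt_or_ge a1 a4 with h14' | h14'
  · rcases Nat.lt_or_ge a2 a3 with h23' | h23'
    · exact h12 (two_pow_add_inj h14' h23' h).1
    · have h32 : a3 < a2 := lt_of_le_of_ne h23' (Ne.symm h23)
      have h2 : 2 ^ a1 + 2 ^ a4 = 2 ^ a3 + 2 ^ a2 := by
        rw [h, Nat.add_comm (2^a2) (2^a3)]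
      exact h13 (two_pow_add_inj h14' h32 h2).1
  · have h41 : a4 < a1 := lt_of_le_of_ne h14' (Ne.symm h14)
    rcases Nat.lt_or_ge a2 a3 with h23' | h23'
    · have h2 : 2 ^ a4 + 2 ^ a1 = 2 ^ a2 + 2 ^ a3 := by
        rw [Nat.add_comm (2^a4) (2^a1), h]
      exact h24 (two_pow_add_inj h41 h23' h2).1.symm
    · have h32 : a3 < a2 := lt_of_le_of_ne h23' (Ne.symm h23)
      have h2 : 2 ^ a4 + 2 ^ a1 = 2 ^ a3 + 2 ^ a2 := by
        rw [Nat.add_comm (2^a4) (2^a1), h, Nat.add_comm (2^a2) (2^a3)]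
      exact h34 (two_pow_add_inj h41 h32 h2).1.symm

lemma int_cast_unit {p k : ℕ} (hp : p.Prime) (w : ℤ) (hw0 : w ≠ 0)
    (hlow : -(p:ℤ) < w) (hhigh : w < p) : IsUnit ((w : ZMod (p ^ k))) := by
  have hwabs : w.natAbs < p := by omega
  haveI : NeZero (p ^ k) := ⟨pow_ne_zero k hp.ne_zero⟩
  have hnd : ¬ p ∣ w.natAbs := fun hdvd =>
    absurd (Nat.le_of_dvd (Int.natAbs_pos.mpr hw0) hdvd) (not_le.mpr hwabs)
  have hcop : Nat.Coprime w.natAbs (p ^ k) :=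
    ((Nat.Prime.coprime_iff_not_dvd hp).mpr hnd).symm.pow_right k
  have hu : IsUnit ((w.natAbs : ZMod (p ^ k))) :=
    (ZMod.isUnit_iff_coprime w.natAbs (p ^ k)).mpr hcop
  rcases Int.natAbs_eq w with he | he
  · rw [he]; simp only [Int.cast_natCast]; exact hu
  · rw [he]; simp only [Int.cast_neg, Int.cast_natCast]; exact hu.neg

end TwoPow

section MainAssembly

lemma natcard_sigma_fin {n : ℕ} (f : Fin n → Type*) [∀ j, Finite (f j)] :
    Nat.card (Σ j, f j) = ∑ j, Nat.card (f j) := by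
  haveI : ∀ j, Fintype (f j) := fun j => Fintype.ofFinite (f j)
  simp only [Nat.card_eq_fintype_card]
  exact Fintype.card_sigma

lemma sum_if_le (k r A : ℕ) (hrk : r ≤ k) :
    ∑ j : Fin (k+1), (if (j : ℕ) ≤ r then A else 1) = (r+1) * A + (k - r) := by
  rw [Fin.sum_univ_eq_sum_range (fun j => if j ≤ r then A else 1)]
  rw [Finset.range_eq_Ico,
    ← Finset.sum_Ico_consecutive _ (Nat.zero_le (r+1)) (by omega : r+1 ≤ k+1)]
  have e1 : ∑ j ∈ Finset.Ico 0 (r+1), (if j ≤ r then A else 1) = (r+1) * A := by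
    rw [Finset.sum_congr rfl (fun j hj => if_pos (by simp at hj; omega))]
    simp [mul_comm]
  have e2 : ∑ j ∈ Finset.Ico (r+1) (k+1), (if j ≤ r then A else 1) = k - r := by
    rw [Finset.sum_congr rfl (fun j hj => if_neg (by simp at hj; omega))]
    simp
  rw [e1, e2]

variable {I Λ : Type*} [Fintype I] [Fintype Λ]

lemma main_counts (a b : ℕ)
    (ha : Fintype.card I = a) (hb : Fintype.card Λ = b)
    (ha1 : 1 < a) (hb1 : 1 < b)
    (p : ℕ) (hp : p.Prime) (hplarge : 2 ^ (a * b + 1) < p)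
    (k r : ℕ) (hrk : r ≤ k)
    (P : Λ → I → ZMod (p ^ k))
    (e : Λ × I ≃ Fin (a * b))
    (hP : ∀ x : Λ × I, P x.1 x.2 = ((2 ^ (e x : ℕ) * p ^ r : ℕ) : ZMod (p ^ k))) :
    Nat.card {ρ : (I × ZMod (p^k) × Λ) → (I × ZMod (p^k) × Λ) → Prop //
        IsCongruence (rmulAdd P) ρ} = (r+1) * (bell a * bell b) + (k - r) ∧
    Nat.card {ρ : (I × ZMod (p^k) × Λ) → (I × ZMod (p^k) × Λ) → Prop //
        IsDiagonal (rmulAdd P) ρ} = (r+1) * (2^(a^2-a) * 2^(b^2-b)) + (k - r) := by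
  classical
  haveI : NeZero (p ^ k) := ⟨pow_ne_zero k hp.ne_zero⟩
  have hIne : Nonempty I := Fintype.card_pos_iff.mp (by omega)
  have hLne : Nonempty Λ := Fintype.card_pos_iff.mp (by omega)
  obtain ⟨i0⟩ := hIne
  obtain ⟨l0⟩ := hLne
  obtain ⟨i1, hi1⟩ := Fintype.exists_ne_of_one_lt_card (by omega) i0
  obtain ⟨l1, hl1⟩ := Fintype.exists_ne_of_one_lt_card (by omega) l0
  set q : ZMod (p^k) := ((p^r : ℕ) : ZMod (p^k)) with hq
  have hPfac : ∀ l i, P l i = ((2^((e (l,i) : ℕ)) : ℕ) : ZMod (p^k)) * q := by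
    intro l i
    rw [show P l i = P (l,i).1 (l,i).2 from rfl, hP (l,i), hq]
    push_cast
    ring
  -- entries are in any subgroup containing q
  have hentry : ∀ (N : AddSubgroup (ZMod (p^k))), q ∈ N → ∀ l i, P l i ∈ N := by
    intro N hqN l i
    rw [hPfac l i]
    exact nmul_mem N _ hqN
  have hlinkauto : ∀ (N : AddSubgroup (ZMod (p^k))), q ∈ N →
      ∀ (l l' : Λ) (i i' : I),
        ccc P i0 l0 l i - ccc P i0 l0 l' i' ∈ N := by
    intro N hqN l l' i i'
    have hm := hentry N hqN
    exact sub_mem (add_mem (sub_mem (sub_mem (hm _ _) (hm _ _)) (hm _ _)) (hm _ _))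
      (add_mem (sub_mem (sub_mem (hm _ _) (hm _ _)) (hm _ _)) (hm _ _))
  -- forcing
  have hforce : ∀ (N : AddSubgroup (ZMod (p^k))) (l l' : Λ) (i i' : I), l ≠ l' → i ≠ i' →
      (P l i - P l' i - P l i' + P l' i') ∈ N → q ∈ N := by
    intro N l l' i i' hll hii hmem
    set a1 := (e (l,i) : ℕ)
    set a2 := (e (l',i) : ℕ)
    set a3 := (e (l,i') : ℕ)
    set a4 := (e (l',i') : ℕ)
    have hne : ∀ (x y : Λ × I), x ≠ y → (e x : ℕ) ≠ (e y : ℕ) :=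
      fun x y hxy h => hxy (e.injective (Fin.ext h))
    have h12 : a1 ≠ a2 := hne _ _ (by simp [Prod.ext_iff]; tauto)
    have h13 : a1 ≠ a3 := hne _ _ (by simp [Prod.ext_iff]; tauto)
    have h14 : a1 ≠ a4 := hne _ _ (by simp [Prod.ext_iff]; tauto)
    have h23 : a2 ≠ a3 := hne _ _ (by simp [Prod.ext_iff]; tauto)
    have h24 : a2 ≠ a4 := hne _ _ (by simp [Prod.ext_iff]; tauto)
    have h34 : a3 ≠ a4 := hne _ _ (by simp [Prod.ext_iff]; tauto)
    set w : ℤ := 2^a1 + 2^a4 - 2^a2 - 2^a3 with hw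
    have hw0 : w ≠ 0 := by
      intro h0
      have : (2^a1 + 2^a4 : ℤ) = 2^a2 + 2^a3 := by omega
      exact two_pow_four_ne h12 h13 h14 h23 h24 h34 (by exact_mod_cast this)
    have hbound : ∀ x : Λ × I, (2:ℤ)^((e x : ℕ)) < 2^(a*b) :=
      fun x => pow_lt_pow_right₀ (by norm_num) (e x).2
    have hpZ : ((2:ℤ))^(a*b+1) < (p:ℤ) := by exact_mod_cast hplarge
    have hp1 : ((2:ℤ))^(a*b+1) = 2^(a*b) * 2 := pow_succ 2 (a*b)
    have b1 := hbound (l,i)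
    have b2 := hbound (l',i)
    have b3 := hbound (l,i')
    have b4 := hbound (l',i')
    have hn1 : (0:ℤ) < 2^a1 := pow_pos (by norm_num) _
    have hn2 : (0:ℤ) < 2^a2 := pow_pos (by norm_num) _
    have hn3 : (0:ℤ) < 2^a3 := pow_pos (by norm_num) _
    have hn4 : (0:ℤ) < 2^a4 := pow_pos (by norm_num) _
    have hlow : -(p:ℤ) < w := by rw [hw]; linarith
    have hhigh : w < (p:ℤ) := by rw [hw]; linarith
    have hunit : IsUnit ((w : ZMod (p^k))) := int_cast_unit hp w hw0 hlow hhigh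
    have heq : P l i - P l' i - P l i' + P l' i' = ((w : ℤ) : ZMod (p^k)) * q := by
      rw [hPfac l i, hPfac l' i, hPfac l i', hPfac l' i', hw]
      push_cast
      ring
    rw [heq] at hmem
    have : q = ↑hunit.unit⁻¹ * (((w : ℤ) : ZMod (p^k)) * q) := by
      rw [← mul_assoc, IsUnit.val_inv_mul, one_mul]
    rw [this]
    exact nmul_mem N _ hmem
  -- fiber counting
  have hcase : ∀ (N : AddSubgroup (ZMod (p^k))), q ∉ N →
      ∀ (rl : (I → I → Prop) × (Λ → Λ → Prop)), CondT P i0 l0 (N, rl.1, rl.2) →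
        rl = (Eq, Eq) := by
    intro N hqN rl hc
    obtain ⟨hc1, hc2, hc3, hc4⟩ := hc
    refine Prod.ext ?_ ?_
    · funext i j
      apply propext
      constructor
      · intro hij
        by_contra hne
        have hmem := hc3 i j hij l1
        have heq : ccc P i0 l0 l1 i - ccc P i0 l0 l1 j =
            P l1 i - P l0 i - P l1 j + P l0 j := by
          simp only [ccc]; ring
        rw [heq] at hmem
        exact hqN (hforce N l1 l0 i j hl1 hne hmem)
      · rintro rfl; exact hc1 i
    · funext l l'
      apply propext
      constructor
      · intro hll
        by_contra hne
        have hmem := hc4 l l' hll i1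
        have heq : ccc P i0 l0 l i1 - ccc P i0 l0 l' i1 =
            P l i1 - P l' i1 - P l i0 + P l' i0 := by
          simp only [ccc]; ring
        rw [heq] at hmem
        exact hqN (hforce N l l' i1 i0 hne hi1 hmem)
      · rintro rfl; exact hc2 l
  -- counting: diagonal side
  have hdiag : Nat.card {ρ : (I × ZMod (p^k) × Λ) → (I × ZMod (p^k) × Λ) → Prop //
      IsDiagonal (rmulAdd P) ρ} = (r+1) * (2^(a^2-a) * 2^(b^2-b)) + (k - r) := by
    rw [← Nat.card_congr (equivDiag P i0 l0)]
    have e1 : {t : TrT I Λ (p^k) // CondT P i0 l0 t} ≃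
        Σ N : AddSubgroup (ZMod (p^k)), {rl : (I → I → Prop) × (Λ → Λ → Prop) //
          CondT P i0 l0 (N, rl.1, rl.2)} :=
      Equiv.subtypeProdEquivSigmaSubtype (fun (N : AddSubgroup (ZMod (p^k))) (rl : (I → I → Prop) × (Λ → Λ → Prop)) => CondT P i0 l0 (N, rl.1, rl.2))
    have e2 : (Σ j : Fin (k+1), {rl : (I → I → Prop) × (Λ → Λ → Prop) //
          CondT P i0 l0 (esub hp k j, rl.1, rl.2)}) ≃
        Σ N : AddSubgroup (ZMod (p^k)), {rl : (I → I → Prop) × (Λ → Λ → Prop) //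
          CondT P i0 l0 (N, rl.1, rl.2)} :=
      Equiv.sigmaCongrLeft (β := fun N => {rl : (I → I → Prop) × (Λ → Λ → Prop) //
        CondT P i0 l0 (N, rl.1, rl.2)}) (esub hp k)
    rw [Nat.card_congr (e1.trans e2.symm), natcard_sigma_fin]
    have hterm : ∀ j : Fin (k+1), Nat.card {rl : (I → I → Prop) × (Λ → Λ → Prop) //
        CondT P i0 l0 (esub hp k j, rl.1, rl.2)} =
        if (j : ℕ) ≤ r then (2^(a^2-a) * 2^(b^2-b)) else 1 := by
      intro j
      by_cases hjr : (j : ℕ) ≤ r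
      · rw [if_pos hjr]
        have hqN : q ∈ esub hp k j := (esub_mem hp hrk j).mpr hjr
        have eiff : ∀ rl : (I → I → Prop) × (Λ → Λ → Prop),
            (CondT P i0 l0 (esub hp k j, rl.1, rl.2)) ↔
            ((∀ i, rl.1 i i) ∧ (∀ l, rl.2 l l)) := fun rl =>
          ⟨fun h => ⟨h.1, h.2.1⟩, fun h => ⟨h.1, h.2,
            fun i j' _ l => hlinkauto _ hqN _ _ _ _,
            fun l l' _ i => hlinkauto _ hqN _ _ _ _⟩⟩
        rw [Nat.card_congr ((Equiv.subtypeEquivRight eiff).trans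
          (Equiv.subtypeProdEquivProd
            (p := fun RI : I → I → Prop => ∀ i, RI i i)
            (q := fun RL : Λ → Λ → Prop => ∀ l, RL l l))),
          Nat.card_prod, card_reflrel, card_reflrel, ha, hb]
      · rw [if_neg hjr]
        have hqN : q ∉ esub hp k j := fun h => hjr ((esub_mem hp hrk j).mp h)
        haveI : Unique {rl : (I → I → Prop) × (Λ → Λ → Prop) //
            CondT P i0 l0 (esub hp k j, rl.1, rl.2)} :=
          { default := ⟨(Eq, Eq), ⟨fun i => rfl, fun l => rfl,
              fun i j' hij l => by subst hij; rw [sub_self]; exact zero_mem _,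
              fun l l' hll i => by subst hll; rw [sub_self]; exact zero_mem _⟩⟩
            uniq := fun rl => Subtype.ext (hcase _ hqN rl.1 rl.2) }
        exact Nat.card_unique
    rw [Finset.sum_congr rfl (fun j _ => hterm j), sum_if_le _ _ _ hrk]
  -- counting: congruence side
  have hcong : Nat.card {ρ : (I × ZMod (p^k) × Λ) → (I × ZMod (p^k) × Λ) → Prop //
      IsCongruence (rmulAdd P) ρ} = (r+1) * (bell a * bell b) + (k - r) := by
    rw [← Nat.card_congr (equivCong P i0 l0)]
    have e1 : {t : TrT I Λ (p^k) // CondT P i0 l0 t ∧ Equivalence t.2.1 ∧ Equivalence t.2.2} ≃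
        Σ N : AddSubgroup (ZMod (p^k)), {rl : (I → I → Prop) × (Λ → Λ → Prop) //
          CondT P i0 l0 (N, rl.1, rl.2) ∧ Equivalence rl.1 ∧ Equivalence rl.2} :=
      Equiv.subtypeProdEquivSigmaSubtype
        (fun (N : AddSubgroup (ZMod (p^k))) (rl : (I → I → Prop) × (Λ → Λ → Prop)) =>
          CondT P i0 l0 (N, rl.1, rl.2) ∧ Equivalence rl.1 ∧ Equivalence rl.2)
    have e2 : (Σ j : Fin (k+1), {rl : (I → I → Prop) × (Λ → Λ → Prop) //
          CondT P i0 l0 (esub hp k j, rl.1, rl.2) ∧ Equivalence rl.1 ∧ Equivalence rl.2}) ≃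
        Σ N : AddSubgroup (ZMod (p^k)), {rl : (I → I → Prop) × (Λ → Λ → Prop) //
          CondT P i0 l0 (N, rl.1, rl.2) ∧ Equivalence rl.1 ∧ Equivalence rl.2} :=
      Equiv.sigmaCongrLeft (β := fun N => {rl : (I → I → Prop) × (Λ → Λ → Prop) //
        CondT P i0 l0 (N, rl.1, rl.2) ∧ Equivalence rl.1 ∧ Equivalence rl.2}) (esub hp k)
    rw [Nat.card_congr (e1.trans e2.symm), natcard_sigma_fin]
    have hterm : ∀ j : Fin (k+1), Nat.card {rl : (I → I → Prop) × (Λ → Λ → Prop) //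
        CondT P i0 l0 (esub hp k j, rl.1, rl.2) ∧ Equivalence rl.1 ∧ Equivalence rl.2} =
        if (j : ℕ) ≤ r then (bell a * bell b) else 1 := by
      intro j
      by_cases hjr : (j : ℕ) ≤ r
      · rw [if_pos hjr]
        have hqN : q ∈ esub hp k j := (esub_mem hp hrk j).mpr hjr
        have eiff : ∀ rl : (I → I → Prop) × (Λ → Λ → Prop),
            (CondT P i0 l0 (esub hp k j, rl.1, rl.2) ∧
              Equivalence rl.1 ∧ Equivalence rl.2) ↔
            (Equivalence rl.1 ∧ Equivalence rl.2) := fun rl =>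
          ⟨fun h => h.2, fun h => ⟨⟨fun i => h.1.refl i, fun l => h.2.refl l,
            fun i j' _ l => hlinkauto _ hqN _ _ _ _,
            fun l l' _ i => hlinkauto _ hqN _ _ _ _⟩, h⟩⟩
        rw [Nat.card_congr ((Equiv.subtypeEquivRight eiff).trans
          (Equiv.subtypeProdEquivProd
            (p := fun RI : I → I → Prop => Equivalence RI)
            (q := fun RL : Λ → Λ → Prop => Equivalence RL))),
          Nat.card_prod, card_eqvrel, card_eqvrel, ha, hb]
      · rw [if_neg hjr]
        have hqN : q ∉ esub hp k j := fun h => hjr ((esub_mem hp hrk j).mp h)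
        haveI : Unique {rl : (I → I → Prop) × (Λ → Λ → Prop) //
            CondT P i0 l0 (esub hp k j, rl.1, rl.2) ∧
              Equivalence rl.1 ∧ Equivalence rl.2} :=
          { default := ⟨(Eq, Eq), ⟨⟨fun i => rfl, fun l => rfl,
              fun i j' hij l => by subst hij; rw [sub_self]; exact zero_mem _,
              fun l l' hll i => by subst hll; rw [sub_self]; exact zero_mem _⟩,
              eq_equivalence, eq_equivalence⟩⟩
            uniq := fun rl => Subtype.ext (hcase _ hqN rl.1 rl.2.1) }
        exact Nat.card_unique
    rw [Finset.sum_congr rfl (fun j _ => hterm j), sum_if_le _ _ _ hrk]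
  exact ⟨hcong, hdiag⟩


end MainAssembly

/-- For `|I| = a > 1`, `|Λ| = b > 1`, a prime `p > 2^(ab+1)`, `r ≤ k`, `G = ℤ/p^kℤ`,
and a matrix `P` whose `ab` entries are exactly the residues of
`p^r, 2p^r, …, 2^(ab−1)p^r` (each occurring once),
`χ(M[G;I,Λ;P]) = ((r+1)B(a)B(b) + k − r) / ((r+1)2^(a²−a)2^(b²−b) + k − r)`. -/
theorem stmt17 {I Λ : Type*} [Fintype I] [Fintype Λ] (a b : ℕ)
    (ha : Fintype.card I = a) (hb : Fintype.card Λ = b)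
    (ha1 : 1 < a) (hb1 : 1 < b)
    (p : ℕ) (hp : p.Prime) (hplarge : 2 ^ (a * b + 1) < p)
    (k r : ℕ) (hrk : r ≤ k)
    (P : Λ → I → ZMod (p ^ k))
    (e : Λ × I ≃ Fin (a * b))
    (hP : ∀ x : Λ × I, P x.1 x.2 = ((2 ^ (e x : ℕ) * p ^ r : ℕ) : ZMod (p ^ k))) :
    chi (rmulAdd P) =
      (((r : ℚ) + 1) * bell a * bell b + (k : ℚ) - r) /
      (((r : ℚ) + 1) * 2 ^ (a ^ 2 - a) * 2 ^ (b ^ 2 - b) + (k : ℚ) - r) := by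
  obtain ⟨hc, hd⟩ := main_counts a b ha hb ha1 hb1 p hp hplarge k r hrk P e hP
  unfold chi
  rw [hc, hd]
  have hkr : ((k - r : ℕ) : ℚ) = (k : ℚ) - r := by
    rw [Nat.cast_sub hrk]
  have hnum : (((r+1) * (bell a * bell b) + (k - r) : ℕ) : ℚ) =
      ((r : ℚ) + 1) * bell a * bell b + (k : ℚ) - r := by
    push_cast [hkr]
    ring
  have hden : (((r+1) * (2^(a^2-a) * 2^(b^2-b)) + (k - r) : ℕ) : ℚ) =
      ((r : ℚ) + 1) * 2 ^ (a ^ 2 - a) * 2 ^ (b ^ 2 - b) + (k : ℚ) - r := by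
    push_cast [hkr]
    ring
  rw [hnum, hden]
end

section
/- Let S = 𝒮[Y; G_α; φ_{α,β}] be a Clifford semigroup and let (N, τ) be a diagonal subsemigroup pair, i.e. N is a kernel and τ is a diagonal subsemigroup of the semilattice of idempotents E of S. Then the relation ρ_{N,τ} = {(x,y) ∈ S × S : (xx⁻¹, yy⁻¹) ∈ τ and xy⁻¹ ∈ N} is a diagonal subsemigroup of S. Moreover, the map (N,τ) ↦ ρ_{N,τ} from the set of diagonal subsemigroup pairs to the set of diagonal subsemigroups of S is injective. -/
/-- Multiplication of the Clifford semigroup `𝒮[Y; G_α; φ_{α,β}]` on `Σ α, G α`: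
for `x ∈ G_α`, `y ∈ G_β`, `x·y = (x φ_{α,αβ})(y φ_{β,αβ})`, computed in `G_{α⊓β}`. -/
def cliffMul {Y : Type*} [SemilatticeInf Y] (G : Y → Type*) [∀ α, Group (G α)]
    (φ : ∀ α β : Y, β ≤ α → (G α →* G β)) (x y : Σ α, G α) : Σ α, G α :=
  ⟨x.1 ⊓ y.1, φ x.1 (x.1 ⊓ y.1) inf_le_left x.2 * φ y.1 (x.1 ⊓ y.1) inf_le_right y.2⟩

/-- The relation `ρ_{N,τ} = {(x,y) : (xx⁻¹, yy⁻¹) ∈ τ, xy⁻¹ ∈ N}` on the Clifford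
semigroup; the idempotent `xx⁻¹ = 1_α` (for `x ∈ G_α`) is identified with `α ∈ Y`,
and the product `xy⁻¹` lies in `G_{α⊓β}` for `x ∈ G_α`, `y ∈ G_β`. -/
def cliffRho {Y : Type*} [SemilatticeInf Y] (G : Y → Type*) [∀ α, Group (G α)]
    (φ : ∀ α β : Y, β ≤ α → (G α →* G β))
    (N : ∀ α : Y, Subgroup (G α)) (τ : Y → Y → Prop) (x y : Σ α, G α) : Prop :=
  τ x.1 y.1 ∧
    φ x.1 (x.1 ⊓ y.1) inf_le_left x.2 *
      (φ y.1 (x.1 ⊓ y.1) inf_le_right y.2)⁻¹ ∈ N (x.1 ⊓ y.1)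

private lemma mem_transport {Y : Type*} [SemilatticeInf Y] (G : Y → Type*)
    [∀ α, Group (G α)] (φ : ∀ α β : Y, β ≤ α → (G α →* G β))
    (hid : ∀ (α : Y) (x : G α), φ α α le_rfl x = x)
    (N : ∀ α : Y, Subgroup (G α)) (α β : Y) (e : β = α) (h : β ≤ α) (x : G α) :
    φ α β h x ∈ N β ↔ x ∈ N α := by
  subst e
  have : φ β β h x = x := hid β x
  rw [this]

/-- For a Clifford semigroup `𝒮[Y; G_α; φ_{α,β}]` and a diagonal subsemigroup pair
`(N,τ)` (a kernel `N` together with a diagonal subsemigroup `τ` of the semilattice of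
idempotents `E ≅ Y`), the relation `ρ_{N,τ}` is a diagonal subsemigroup; moreover the
map `(N,τ) ↦ ρ_{N,τ}` is injective on diagonal subsemigroup pairs. -/
theorem stmt18 {Y : Type*} [SemilatticeInf Y] (G : Y → Type*) [∀ α, Group (G α)]
    (φ : ∀ α β : Y, β ≤ α → (G α →* G β))
    (hid : ∀ (α : Y) (x : G α), φ α α le_rfl x = x)
    (hcomp : ∀ (α β γ : Y) (h1 : β ≤ α) (h2 : γ ≤ β) (x : G α),
      φ β γ h2 (φ α β h1 x) = φ α γ (h2.trans h1) x)
    (N : ∀ α : Y, Subgroup (G α)) (hNnormal : ∀ α, (N α).Normal)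
    (hNker : ∀ (α β : Y) (h : β ≤ α), ∀ x ∈ N α, φ α β h x ∈ N β)
    (τ : Y → Y → Prop) (hτ : IsDiagonal (fun α β : Y => α ⊓ β) τ) :
    IsDiagonal (cliffMul G φ) (cliffRho G φ N τ) ∧
    (∀ (N' : ∀ α : Y, Subgroup (G α)), (∀ α, (N' α).Normal) →
      (∀ (α β : Y) (h : β ≤ α), ∀ x ∈ N' α, φ α β h x ∈ N' β) →
      ∀ τ' : Y → Y → Prop, IsDiagonal (fun α β : Y => α ⊓ β) τ' →
      cliffRho G φ N τ = cliffRho G φ N' τ' → N = N' ∧ τ = τ') := by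
  constructor
  · constructor
    · intro s
      refine ⟨hτ.1 s.1, ?_⟩
      rw [mul_inv_cancel]
      exact one_mem _
    · rintro ⟨α, a⟩ ⟨β, b⟩ ⟨γ, c⟩ ⟨δ, d⟩ ⟨hτ1, hN1⟩ ⟨hτ2, hN2⟩
      refine ⟨hτ.2 _ _ _ _ hτ1 hτ2, ?_⟩
      simp only [cliffMul]
      set μ := (α ⊓ γ) ⊓ (β ⊓ δ) with hμ
      have hμα : μ ≤ α := inf_le_left.trans inf_le_left
      have hμβ : μ ≤ β := inf_le_right.trans inf_le_left
      have hμγ : μ ≤ γ := inf_le_left.trans inf_le_right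
      have hμδ : μ ≤ δ := inf_le_right.trans inf_le_right
      have hμαβ : μ ≤ α ⊓ β := le_inf hμα hμβ
      have hμγδ : μ ≤ γ ⊓ δ := le_inf hμγ hμδ
      set A := φ α μ hμα a with hA
      set B := φ β μ hμβ b with hB
      set C := φ γ μ hμγ c with hC
      set D := φ δ μ hμδ d with hD
      have key1 : A * B⁻¹ ∈ N μ := by
        have := hNker (α ⊓ β) μ hμαβ _ hN1
        rw [map_mul, map_inv, hcomp, hcomp] at this
        exact this
      have key2 : C * D⁻¹ ∈ N μ := by
        have := hNker (γ ⊓ δ) μ hμγδ _ hN2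
        rw [map_mul, map_inv, hcomp, hcomp] at this
        exact this
      have goal : A * C * (B * D)⁻¹ ∈ N μ := by
        have h1 : A * (C * D⁻¹) * A⁻¹ ∈ N μ := (hNnormal μ).conj_mem _ key2 A
        have h2 : A * (C * D⁻¹) * A⁻¹ * (A * B⁻¹) ∈ N μ := mul_mem h1 key1
        have : A * (C * D⁻¹) * A⁻¹ * (A * B⁻¹) = A * C * (B * D)⁻¹ := by
          group
        rwa [this] at h2
      change φ (α ⊓ γ) μ inf_le_left (φ α (α ⊓ γ) inf_le_left a * φ γ (α ⊓ γ) inf_le_right c) *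
        (φ (β ⊓ δ) μ inf_le_right (φ β (β ⊓ δ) inf_le_left b * φ δ (β ⊓ δ) inf_le_right d))⁻¹ ∈ N μ
      rw [map_mul, map_mul, hcomp, hcomp, hcomp, hcomp]
      exact goal
  · intro N' hN'normal hN'ker τ' hτ' heq
    have hpt : ∀ x y, cliffRho G φ N τ x y ↔ cliffRho G φ N' τ' x y := by
      intro x y; rw [heq]
    constructor
    · funext α
      ext x
      have h1 : cliffRho G φ N τ ⟨α, x⟩ ⟨α, 1⟩ ↔ x ∈ N α := by
        unfold cliffRho
        simp only [map_one, inv_one, mul_one]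
        constructor
        · intro ⟨_, h⟩
          exact (mem_transport G φ hid N α (α ⊓ α) (inf_idem α) inf_le_left x).mp h
        · intro h
          exact ⟨hτ.1 α, (mem_transport G φ hid N α (α ⊓ α) (inf_idem α) inf_le_left x).mpr h⟩
      have h2 : cliffRho G φ N' τ' ⟨α, x⟩ ⟨α, 1⟩ ↔ x ∈ N' α := by
        unfold cliffRho
        simp only [map_one, inv_one, mul_one]
        constructor
        · intro ⟨_, h⟩
          exact (mem_transport G φ hid N' α (α ⊓ α) (inf_idem α) inf_le_left x).mp h
        · intro h
          exact ⟨hτ'.1 α, (mem_transport G φ hid N' α (α ⊓ α) (inf_idem α) inf_le_left x).mpr h⟩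
      rw [← h1, hpt, h2]
    · funext α β
      have h1 : cliffRho G φ N τ ⟨α, 1⟩ ⟨β, 1⟩ ↔ τ α β := by
        unfold cliffRho
        simp only [map_one, inv_one, mul_one]
        exact ⟨fun h => h.1, fun h => ⟨h, one_mem _⟩⟩
      have h2 : cliffRho G φ N' τ' ⟨α, 1⟩ ⟨β, 1⟩ ↔ τ' α β := by
        unfold cliffRho
        simp only [map_one, inv_one, mul_one]
        exact ⟨fun h => h.1, fun h => ⟨h, one_mem _⟩⟩
      have : τ α β ↔ τ' α β := by rw [← h1, hpt, h2]
      exact propext this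
end
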